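/- arXiv:math/0606527 — 8 statements merged into one kernel-verified Lean document; each statement's English description precedes it below -/
import Mathlib

section
/- Let $(X_i)_{i\ge1}$ be i.i.d. with $F(x)=1-x^{-\alpha}$, $x\ge1$, $\alpha>0$, and $\bar X_n=\max_{i\le n}X_i$. For $c\in(0,1)$ set $v_c(n)=c\,n^{1/\alpha}(\log\log n)^{-1/\alpha}$. Then almost surely $\bar X_n\ge v_c(n)$ eventually for all $n$. -/
/-!
Put `β = c ^ (-α) > 1` and fix `1 < θ < β`. Over the blocks `N k = ⌊θ ^ k⌋`, the event that none of
`X 1, …, X (N k)` exceeds `v k = c N(k+1)^(1/α) (log log N k)^(-1/α)` has probability at most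
`(1 - v k ^ (-α)) ^ N k ≤ exp (-β (N k / N (k+1)) log log N k)`, and the exponent is asymptotic
to `(β / θ) log k` with `β / θ > 1`, so these probabilities are summable. By Borel–Cantelli, almost
surely some `X i` with `i ≤ N k` exceeds `v k` for all large `k`, and `v k` dominates the bound
`paretoLowerBound α c n` throughout the block `N k ≤ n < N (k+1)`.
-/

open MeasureTheory ProbabilityTheory Filter

noncomputable def paretoLowerBound (α c : ℝ) (n : ℕ) : ℝ :=
  c * (n : ℝ) ^ (1 / α) * (Real.log (Real.log n)) ^ (-(1 / α))

open Real Asymptotics Topology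

lemma measure_le_le_ofReal_one_sub_rpow {Ω : Type*} [MeasurableSpace Ω] {μ : Measure Ω}
    [IsProbabilityMeasure μ] {Y : Ω → ℝ} (hY : Measurable Y) {α : ℝ}
    (htail : ∀ x : ℝ, 1 ≤ x → μ {ω | x < Y ω} = ENNReal.ofReal (x ^ (-α))) (v : ℝ) :
    μ {ω | Y ω ≤ v} ≤ ENNReal.ofReal (1 - v ^ (-α)) := by
  have hcompl (x : ℝ) : μ {ω | Y ω ≤ x} = 1 - μ {ω | x < Y ω} := by
    rw [← prob_compl_eq_one_sub (measurableSet_lt measurable_const hY)]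
    simp only [Set.compl_ofPred, not_lt]
  rcases le_or_gt 1 v with hv | hv
  · rw [hcompl, htail v hv, ← ENNReal.ofReal_one,
      ← ENNReal.ofReal_sub _ (rpow_nonneg (by linarith) _)]
  · have hnull : μ {ω | Y ω ≤ 1} = 0 := by simp [hcompl, htail 1 le_rfl]
    exact (measure_mono_null (fun ω (h : Y ω ≤ v) => h.trans hv.le) hnull).trans_le bot_le

lemma ProbabilityTheory.iIndepFun.measure_forall_le_le_exp {Ω ι : Type*} [MeasurableSpace Ω]
    {μ : Measure Ω} {X : ι → Ω → ℝ} (hX : iIndepFun X μ) (s : Finset ι) {v q : ℝ}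
    (h : ∀ i ∈ s, μ {ω | X i ω ≤ v} ≤ ENNReal.ofReal (1 - q)) :
    μ {ω | ∀ i ∈ s, X i ω ≤ v} ≤ ENNReal.ofReal (exp (-(s.card * q))) := by
  have hinter : {ω | ∀ i ∈ s, X i ω ≤ v} = ⋂ i ∈ s, X i ⁻¹' Set.Iic v := by ext; simp
  rw [hinter, hX.meas_biInter fun i _ => ⟨Set.Iic v, measurableSet_Iic, rfl⟩]
  calc ∏ i ∈ s, μ (X i ⁻¹' Set.Iic v) ≤ ∏ _i ∈ s, ENNReal.ofReal (exp (-q)) :=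
        Finset.prod_le_prod' fun i hi =>
          (h i hi).trans (ENNReal.ofReal_le_ofReal (one_sub_le_exp_neg q))
    _ = ENNReal.ofReal (exp (-(s.card * q))) := by
        rw [Finset.prod_const, ← ENNReal.ofReal_pow (exp_pos _).le, ← exp_nat_mul, mul_neg]

lemma ENNReal.tsum_ne_top_of_eventually_le_ofReal {f : ℕ → ENNReal} (hf : ∀ k, f k ≠ ⊤)
    {g : ℕ → ℝ} (hg : Summable g) (hg0 : ∀ k, 0 ≤ g k)
    (hfg : ∀ᶠ k in atTop, f k ≤ ENNReal.ofReal (g k)) : ∑' k, f k ≠ ⊤ := by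
  have hsum : Summable fun k => (f k).toReal := by
    refine hg.of_norm_bounded_eventually_nat ?_
    filter_upwards [hfg] with k hk
    rw [Real.norm_of_nonneg ENNReal.toReal_nonneg]
    exact ENNReal.toReal_le_of_le_ofReal (hg0 k) hk
  have hofReal : ∑' k, f k = ENNReal.ofReal (∑' k, (f k).toReal) := by
    simp [ENNReal.ofReal_tsum_of_nonneg (fun _ => ENNReal.toReal_nonneg) hsum,
      ENNReal.ofReal_toReal (hf _)]
  exact hofReal ▸ ENNReal.ofReal_ne_top

lemma isEquivalent_floor_pow {θ : ℝ} (hθ : 1 < θ) :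
    (fun k : ℕ => (⌊θ ^ k⌋₊ : ℝ)) ~[atTop] (θ ^ ·) :=
  isEquivalent_of_tendsto_one
    (tendsto_nat_floor_div_atTop.comp (tendsto_pow_atTop_atTop_of_one_lt hθ))

lemma isEquivalent_log_log_floor_pow {θ : ℝ} (hθ : 1 < θ) :
    (fun k : ℕ => log (log ⌊θ ^ k⌋₊)) ~[atTop] (fun k => log k) := by
  have hlog : (fun k : ℕ => log ⌊θ ^ k⌋₊) ~[atTop] (fun k => k * log θ) := by
    simpa only [log_pow] using
      (isEquivalent_floor_pow hθ).log (tendsto_pow_atTop_atTop_of_one_lt hθ)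
  have hmul_log : (fun k : ℕ => log (k * log θ)) ~[atTop] (fun k => log k) := by
    refine (IsEquivalent.refl.add_const_of_norm_tendsto_atTop (c := log (log θ)) ?_).congr_left ?_
    · exact tendsto_norm_atTop_atTop.comp (tendsto_log_atTop.comp tendsto_natCast_atTop_atTop)
    · filter_upwards [eventually_ge_atTop 1] with k hk
      rw [log_mul (by positivity) (log_pos hθ).ne']
  exact (hlog.log (tendsto_natCast_atTop_atTop.atTop_mul_const (log_pos hθ))).trans hmul_log

lemma eventually_mul_log_le_floor_pow {θ β s : ℝ} (hθ : 1 < θ) (hs : s < β / θ) :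
    ∀ᶠ k : ℕ in atTop,
      s * log k ≤ ⌊θ ^ k⌋₊ * (β * log (log ⌊θ ^ k⌋₊) / ⌊θ ^ (k + 1)⌋₊) := by
  have hratio : Tendsto (fun k : ℕ => (⌊θ ^ k⌋₊ : ℝ) / ⌊θ ^ (k + 1)⌋₊) atTop (𝓝 θ⁻¹) := by
    have hequiv := (isEquivalent_floor_pow hθ).div
      ((isEquivalent_floor_pow hθ).comp_tendsto (tendsto_add_atTop_nat 1))
    refine hequiv.symm.tendsto_nhds (tendsto_const_nhds.congr fun k => ?_)
    simp only [Pi.div_apply, Function.comp_apply, pow_succ]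
    field_simp
  have hloglog : Tendsto (fun k : ℕ => log (log ⌊θ ^ k⌋₊) / log k) atTop (𝓝 1) := by
    refine (isEquivalent_iff_tendsto_one ?_).1 (isEquivalent_log_log_floor_pow hθ)
    filter_upwards [eventually_ge_atTop 2] with k hk
    exact (log_pos (by exact_mod_cast hk)).ne'
  have hlim := (hratio.const_mul β).mul hloglog
  rw [← div_eq_mul_inv, mul_one] at hlim
  filter_upwards [hlim.eventually (lt_mem_nhds hs), eventually_ge_atTop 2] with k hk hk2
  have hlogk : 0 < log k := log_pos (by exact_mod_cast hk2)
  calc s * log k ≤ β * (⌊θ ^ k⌋₊ / ⌊θ ^ (k + 1)⌋₊) * (log (log ⌊θ ^ k⌋₊) / log k) * log k :=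
        by gcongr
    _ = _ := by field_simp

lemma eventually_exists_le_lt_succ {N : ℕ → ℕ} (hmono : Monotone N)
    (htop : Tendsto N atTop atTop) {P : ℕ → Prop} (hP : ∀ᶠ k in atTop, P k) :
    ∀ᶠ n in atTop, ∃ k, P k ∧ N k ≤ n ∧ n < N (k + 1) := by
  classical
  obtain ⟨K, hK⟩ := eventually_atTop.1 hP
  filter_upwards [eventually_ge_atTop (N K)] with n hn
  have hex : ∃ j, n < N j := (htop.eventually_gt_atTop n).exists
  have hKj : K < Nat.find hex :=
    lt_of_not_ge fun h => (Nat.find_spec hex).not_ge ((hmono h).trans hn)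
  obtain ⟨k, hk⟩ : ∃ k, Nat.find hex = k + 1 := Nat.exists_eq_add_one.2 (by omega)
  exact ⟨k, hK k (by omega), not_lt.1 (Nat.find_min hex (by omega)), hk ▸ Nat.find_spec hex⟩

lemma one_lt_log_natCast {m : ℕ} (hm : 3 ≤ m) : 1 < log m := by
  rw [lt_log_iff_exp_lt (by positivity)]
  have : (3 : ℝ) ≤ m := by exact_mod_cast hm
  linarith [exp_one_lt_d9]

/-- On the diagonal, `blockThreshold α c n n = paretoLowerBound α c n`. -/
noncomputable def blockThreshold (α c : ℝ) (m n : ℕ) : ℝ :=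
  c * (n : ℝ) ^ (1 / α) * (log (log m)) ^ (-(1 / α))

lemma blockThreshold_rpow_neg {α c : ℝ} (hα : 0 < α) (hc : 0 < c) {m : ℕ} (hm : 3 ≤ m)
    (n : ℕ) : blockThreshold α c m n ^ (-α) = c ^ (-α) * log (log m) / n := by
  have hL : 0 < log (log m) := log_pos (one_lt_log_natCast hm)
  have hn : (0 : ℝ) ≤ n := n.cast_nonneg
  rw [blockThreshold, mul_rpow (by positivity) (by positivity), mul_rpow hc.le (by positivity),
    ← rpow_mul hn, ← rpow_mul hL.le, show 1 / α * -α = -1 by field_simp,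
    show -(1 / α) * -α = 1 by field_simp, rpow_neg_one, rpow_one, div_eq_mul_inv]
  ring

lemma blockThreshold_le_blockThreshold {α c : ℝ} (hα : 0 < α) (hc : 0 ≤ c) {m m' n n' : ℕ}
    (hm : 3 ≤ m) (hmm' : m ≤ m') (hnn' : n' ≤ n) :
    blockThreshold α c m' n' ≤ blockThreshold α c m n := by
  have hL : 0 < log (log m) := log_pos (one_lt_log_natCast hm)
  have hm0 : (0 : ℝ) < m := by positivity
  have hlog : log m ≤ log m' := log_le_log hm0 (by exact_mod_cast hmm')
  have hL' : log (log m) ≤ log (log m') := log_le_log (by linarith [one_lt_log_natCast hm]) hlog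
  have hpow : (n' : ℝ) ^ (1 / α) ≤ (n : ℝ) ^ (1 / α) :=
    rpow_le_rpow n'.cast_nonneg (by exact_mod_cast hnn') (by positivity)
  have hpow_neg : log (log m') ^ (-(1 / α)) ≤ log (log m) ^ (-(1 / α)) :=
    rpow_le_rpow_of_nonpos hL hL' (by simp [hα.le])
  exact mul_le_mul (mul_le_mul_of_nonneg_left hpow hc) hpow_neg
    (rpow_nonneg (hL.trans_le hL').le _) (by positivity)

lemma eventually_measure_forall_le_blockThreshold_le {Ω : Type*} [MeasurableSpace Ω]
    {μ : Measure Ω} [IsProbabilityMeasure μ] {α c θ s : ℝ} (hα : 0 < α) (hc : 0 < c)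
    (hθ : 1 < θ) (hs : s < c ^ (-α) / θ) {X : ℕ → Ω → ℝ} (hmeas : ∀ i, Measurable (X i))
    (hindep : iIndepFun X μ)
    (hdist : ∀ i, ∀ x : ℝ, 1 ≤ x → μ {ω | x < X i ω} = ENNReal.ofReal (x ^ (-α))) :
    ∀ᶠ k : ℕ in atTop,
      μ {ω | ∀ i ∈ Finset.Icc 1 ⌊θ ^ k⌋₊, X i ω ≤ blockThreshold α c ⌊θ ^ k⌋₊ ⌊θ ^ (k + 1)⌋₊}
        ≤ ENNReal.ofReal ((k : ℝ) ^ (-s)) := by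
  have hN : Tendsto (fun k : ℕ => ⌊θ ^ k⌋₊) atTop atTop :=
    tendsto_nat_floor_atTop.comp (tendsto_pow_atTop_atTop_of_one_lt hθ)
  filter_upwards [eventually_mul_log_le_floor_pow hθ hs, hN.eventually_ge_atTop 3,
    eventually_gt_atTop 0] with k hk hk3 hk0
  calc _ ≤ ENNReal.ofReal (exp (-((Finset.Icc 1 ⌊θ ^ k⌋₊).card *
          blockThreshold α c ⌊θ ^ k⌋₊ ⌊θ ^ (k + 1)⌋₊ ^ (-α)))) :=
        hindep.measure_forall_le_le_exp _ fun i _ =>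
          measure_le_le_ofReal_one_sub_rpow (hmeas i) (hdist i) _
    _ ≤ ENNReal.ofReal (exp (-(s * log k))) := by
        rw [Nat.card_Icc, Nat.add_sub_cancel, blockThreshold_rpow_neg hα hc hk3]
        gcongr
    _ = ENNReal.ofReal ((k : ℝ) ^ (-s)) := by
        rw [rpow_def_of_pos (Nat.cast_pos.2 hk0), mul_neg, mul_comm]

theorem pareto_max_lower_bound_eventually
    {Ω : Type*} [MeasureSpace Ω] [IsProbabilityMeasure (ℙ : Measure Ω)]
    (α c : ℝ) (hα : 0 < α) (hc : c ∈ Set.Ioo (0 : ℝ) 1)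
    (X : ℕ → Ω → ℝ) (hmeas : ∀ i, Measurable (X i))
    (hindep : iIndepFun X ℙ)
    (hdist : ∀ i, ∀ x : ℝ, 1 ≤ x → ℙ {ω | x < X i ω} = ENNReal.ofReal (x ^ (-α))) :
    ∀ᵐ ω ∂ℙ, ∀ᶠ n : ℕ in atTop, ∃ i ∈ Finset.Icc 1 n, paretoLowerBound α c n ≤ X i ω := by
  obtain ⟨hc0, hc1⟩ := hc
  have hβ : 1 < c ^ (-α) := one_lt_rpow_of_pos_of_lt_one_of_neg hc0 hc1 (by linarith)
  obtain ⟨θ, hθ, hθβ⟩ := exists_between hβ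
  obtain ⟨s, hs, hsβ⟩ := exists_between ((one_lt_div (by linarith)).2 hθβ)
  have hN : Tendsto (fun k : ℕ => ⌊θ ^ k⌋₊) atTop atTop :=
    tendsto_nat_floor_atTop.comp (tendsto_pow_atTop_atTop_of_one_lt hθ)
  have hsum := ENNReal.tsum_ne_top_of_eventually_le_ofReal (fun _ => measure_ne_top _ _)
    (summable_nat_rpow.2 (neg_lt_neg hs)) (fun k => rpow_nonneg k.cast_nonneg _)
    (eventually_measure_forall_le_blockThreshold_le hα hc0 hθ hsβ hmeas hindep hdist)
  filter_upwards [ae_eventually_notMem hsum] with ω hω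
  filter_upwards [eventually_exists_le_lt_succ
    (fun a b h => Nat.floor_mono (pow_le_pow_right₀ hθ.le h)) hN
    (hω.and (hN.eventually_ge_atTop 3))] with n ⟨k, ⟨hωk, hk3⟩, hkn, hnk⟩
  simp only [not_forall, not_le] at hωk
  obtain ⟨i, hi, hlt⟩ := hωk
  exact ⟨i, Finset.Icc_subset_Icc_right hkn hi,
    (blockThreshold_le_blockThreshold hα hc0.le hk3 hkn hnk.le).trans hlt.le⟩
end

section
/- Let $(X_i)_{i\ge1}$ be i.i.d. with $F(x)=1-x^{-\alpha}$, $x\ge1$, $\alpha>0$, and $\bar X_n=\max_{i\le n}X_i$. Let $(n_k)$ be an increasing sequence of natural numbers such that for some $\eta\in(0,1)$, $n_{k+1}-n_k<n_k^\eta$ for all large $k$. For $\rho<0$ set $u_\rho(n)=n^{1/\alpha}(\log n)^{1/\alpha}(\log\log n)^{1/\alpha}(\log\log\log n)^{1/\alpha+\rho}$. Then almost surely $\bar X_{n_k}\ge u_\rho(n_k)$ for infinitely many $k$. -/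
open MeasureTheory ProbabilityTheory Filter

noncomputable def paretoBound (α ρ : ℝ) (n : ℕ) : ℝ :=
  (n : ℝ) ^ (1 / α) * (Real.log n) ^ (1 / α) * (Real.log (Real.log n)) ^ (1 / α) *
    (Real.log (Real.log (Real.log n))) ^ (1 / α + ρ)

/-!
Choose for each `i` an index `κ i` with `i ≤ n (κ i)`; the gap condition gives `n (κ i) ≤ 2 i`
for large `i`. The events `{X i > u_ρ (n (κ i))}` are independent, and since `ρ ≤ 0` and the
iterated-log product at most doubles factorwise on `[i, 2 i]`, their probabilities are at least
`1 / (16 i log i log log i log log log i)`. By the mean value theorem this dominates the increments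
of `log log log log i / 16`, so the series diverges and the second Borel–Cantelli lemma makes
infinitely many of the events occur; each one is the required event at `k = κ i`.
-/

open Real Finset
open scoped ENNReal

section IteratedLog

variable {k : ℕ} {x y : ℝ}

theorem iterate_log_le_iterate_log (hx : ∀ j < k, 0 < log^[j] x) (hxy : x ≤ y) :
    log^[k] x ≤ log^[k] y := by
  induction k with
  | zero => exact hxy
  | succ k ih =>
    rw [Function.iterate_succ_apply', Function.iterate_succ_apply']
    exact log_le_log (hx k k.lt_succ_self) (ih fun j hj => hx j (hj.trans k.lt_succ_self))

theorem prod_iterate_log_le_prod (hx : ∀ j < k, 0 < log^[j] x) (hxy : x ≤ y) :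
    ∏ j ∈ range k, log^[j] x ≤ ∏ j ∈ range k, log^[j] y :=
  prod_le_prod (fun j hj => (hx j (mem_range.1 hj)).le) fun _ hj =>
    iterate_log_le_iterate_log (fun i hi => hx i (hi.trans (mem_range.1 hj))) hxy

theorem hasDerivAt_iterate_log (hx : ∀ j < k, log^[j] x ≠ 0) :
    HasDerivAt log^[k] (∏ j ∈ range k, log^[j] x)⁻¹ x := by
  induction k with
  | zero => simpa using hasDerivAt_id x
  | succ k ih =>
    rw [Function.iterate_succ', prod_range_succ, mul_inv, mul_comm]
    exact (hasDerivAt_log (hx k k.lt_succ_self)).comp x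
      (ih fun j hj => hx j (hj.trans k.lt_succ_self))

theorem iterate_log_add_one_sub_le (hx : ∀ j < k, 0 < log^[j] x) :
    log^[k] (x + 1) - log^[k] x ≤ (∏ j ∈ range k, log^[j] x)⁻¹ := by
  have hpos : ∀ c, x ≤ c → ∀ j < k, log^[j] c ≠ 0 := fun c hc j hj =>
    ((hx j hj).trans_le (iterate_log_le_iterate_log (fun i hi => hx i (hi.trans hj)) hc)).ne'
  obtain ⟨c, hc, hslope⟩ := exists_hasDerivAt_eq_slope log^[k]
    (fun c => (∏ j ∈ range k, log^[j] c)⁻¹) (lt_add_one x)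
    (fun c hc => (hasDerivAt_iterate_log (hpos c hc.1)).continuousAt.continuousWithinAt)
    (fun c hc => hasDerivAt_iterate_log (hpos c hc.1.le))
  rw [add_sub_cancel_left, div_one] at hslope
  rw [← hslope]
  exact inv_anti₀ (prod_pos fun j hj => hx j (mem_range.1 hj))
    (prod_iterate_log_le_prod hx hc.1.le)

theorem iterate_log_le_two_mul (hx : ∀ j ≤ k, 1 ≤ log^[j] x) (hxy : x ≤ y) (hy : y ≤ 2 * x) :
    log^[k] y ≤ 2 * log^[k] x := by
  induction k with
  | zero => exact hy
  | succ k ih =>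
    have hx' : ∀ j ≤ k, 1 ≤ log^[j] x := fun j hj => hx j (hj.trans k.le_succ)
    have hkx : 1 ≤ log^[k] x := hx' k le_rfl
    have hky : log^[k] x ≤ log^[k] y :=
      iterate_log_le_iterate_log (fun j hj => one_pos.trans_le (hx' j hj.le)) hxy
    have hlog : 1 ≤ log (log^[k] x) := by
      simpa [Function.iterate_succ_apply'] using hx (k + 1) le_rfl
    rw [Function.iterate_succ_apply', Function.iterate_succ_apply']
    calc log (log^[k] y) ≤ log (2 * log^[k] x) := log_le_log (by linarith) (ih hx')
      _ = log 2 + log (log^[k] x) := log_mul two_ne_zero (one_pos.trans_le hkx).ne'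
      _ ≤ 2 * log (log^[k] x) := by linarith [log_two_lt_d9]

theorem prod_iterate_log_le_two_pow_mul (hx : ∀ j < k, 1 ≤ log^[j] x) (hxy : x ≤ y)
    (hy : y ≤ 2 * x) : ∏ j ∈ range k, log^[j] y ≤ 2 ^ k * ∏ j ∈ range k, log^[j] x := by
  have hpos : ∀ j < k, 0 < log^[j] x := fun j hj => one_pos.trans_le (hx j hj)
  calc ∏ j ∈ range k, log^[j] y ≤ ∏ j ∈ range k, 2 * log^[j] x := by
        refine prod_le_prod (fun j hj => ?_) fun j hj => ?_
        · have hj := mem_range.1 hj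
          exact (hpos j hj).le.trans
            (iterate_log_le_iterate_log (fun i hi => hpos i (hi.trans hj)) hxy)
        · exact iterate_log_le_two_mul (fun i hi => hx i (hi.trans_lt (mem_range.1 hj))) hxy hy
    _ = 2 ^ k * ∏ j ∈ range k, log^[j] x := by rw [prod_mul_distrib, prod_const, card_range]

theorem eventually_one_le_iterate_log (k : ℕ) : ∀ᶠ x : ℝ in atTop, ∀ j < k, 1 ≤ log^[j] x :=
  (Set.finite_lt_nat k).eventually_all.2 fun j _ =>
    (tendsto_log_atTop.iterate j).eventually_ge_atTop 1

end IteratedLog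

theorem inv_prod_iterate_log_le_rpow {α ρ : ℝ} (hα : 0 < α) (hρ : ρ ≤ 0) {m : ℕ}
    (hm : ∀ j < 4, 1 ≤ log^[j] (m : ℝ)) :
    (∏ j ∈ range 4, log^[j] (m : ℝ))⁻¹ ≤ max (paretoBound α ρ m) 1 ^ (-α) := by
  obtain ⟨h0, h1, h2, h3⟩ : 1 ≤ (m : ℝ) ∧ 1 ≤ log m ∧ 1 ≤ log (log m) ∧ 1 ≤ log (log (log m)) :=
    ⟨hm 0 (by norm_num), hm 1 (by norm_num), hm 2 (by norm_num), hm 3 (by norm_num)⟩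
  have hprod : ∏ j ∈ range 4, log^[j] (m : ℝ) = m * log m * log (log m) * log (log (log m)) := by
    simp [prod_range_succ]
  rw [hprod]
  rcases max_choice (paretoBound α ρ m) 1 with h | h <;> rw [h]
  · have hexp₁ : 1 / α * -α = -1 := by field_simp
    have hexp₂ : (1 / α + ρ) * -α = -1 + -(ρ * α) := by field_simp; ring
    have hpow : paretoBound α ρ m ^ (-α) =
        (m * log m * log (log m) * log (log (log m)))⁻¹ * log (log (log m)) ^ (-(ρ * α)) := by
      rw [paretoBound, mul_rpow (by positivity) (by positivity),
        mul_rpow (by positivity) (by positivity), mul_rpow (by positivity) (by positivity),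
        ← rpow_mul (by positivity), ← rpow_mul (by positivity), ← rpow_mul (by positivity),
        ← rpow_mul (by positivity), hexp₁, hexp₂, rpow_add (by positivity), rpow_neg_one,
        rpow_neg_one, rpow_neg_one, rpow_neg_one, mul_inv, mul_inv, mul_inv, ← mul_assoc]
    rw [hpow]
    exact le_mul_of_one_le_right (by positivity)
      (one_le_rpow h3 (neg_nonneg.2 (mul_nonpos_of_nonpos_of_nonneg hρ hα.le)))
  · rw [one_rpow]
    exact inv_le_one_of_one_le₀ (one_le_mul_of_one_le_of_one_le
      (one_le_mul_of_one_le_of_one_le (one_le_mul_of_one_le_of_one_le h0 h1) h2) h3)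

theorem iterate_log_four_sub_le_paretoBound_rpow {α ρ : ℝ} (hα : 0 < α) (hρ : ρ ≤ 0) {i m : ℕ}
    (hi : ∀ j < 4, 1 ≤ log^[j] (i : ℝ)) (him : i ≤ m) (hmi : m ≤ 2 * i) :
    (log^[4] ((i : ℝ) + 1) - log^[4] (i : ℝ)) / 16 ≤ max (paretoBound α ρ m) 1 ^ (-α) := by
  have hpos : ∀ j < 4, 0 < log^[j] (i : ℝ) := fun j hj => one_pos.trans_le (hi j hj)
  have him' : (i : ℝ) ≤ m := by exact_mod_cast him
  have hmi' : (m : ℝ) ≤ 2 * i := by exact_mod_cast hmi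
  have hm : ∀ j < 4, 1 ≤ log^[j] (m : ℝ) := fun j hj =>
    (hi j hj).trans (iterate_log_le_iterate_log (fun l hl => hpos l (hl.trans hj)) him')
  calc (log^[4] ((i : ℝ) + 1) - log^[4] (i : ℝ)) / 16
      ≤ (∏ j ∈ range 4, log^[j] (i : ℝ))⁻¹ / 16 := by
        gcongr; exact iterate_log_add_one_sub_le hpos
    _ = (2 ^ 4 * ∏ j ∈ range 4, log^[j] (i : ℝ))⁻¹ := by rw [mul_inv]; ring
    _ ≤ (∏ j ∈ range 4, log^[j] (m : ℝ))⁻¹ :=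
        inv_anti₀ (prod_pos fun j hj => one_pos.trans_le (hm j (mem_range.1 hj)))
          (prod_iterate_log_le_two_pow_mul hi him' hmi')
    _ ≤ max (paretoBound α ρ m) 1 ^ (-α) := inv_prod_iterate_log_le_rpow hα hρ hm

theorem ENNReal.tsum_eq_top_of_ofReal_sub_le {f : ℕ → ℝ} (hf : Tendsto f atTop atTop)
    {a : ℕ → ℝ≥0∞} (ha : ∀ᶠ i in atTop, ENNReal.ofReal (f (i + 1) - f i) ≤ a i) :
    ∑' i, a i = ∞ := by
  obtain ⟨N₀, hN₀⟩ := eventually_atTop.1 ha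
  have hpartial : ∀ N ≥ N₀, ENNReal.ofReal (f N - f N₀) ≤ ∑ i ∈ Ico N₀ N, a i := by
    intro N hN
    induction N, hN using Nat.le_induction with
    | base => simp
    | succ N hN ih =>
      rw [sum_Ico_succ_top hN]
      calc ENNReal.ofReal (f (N + 1) - f N₀)
          = ENNReal.ofReal ((f N - f N₀) + (f (N + 1) - f N)) := by ring_nf
        _ ≤ ENNReal.ofReal (f N - f N₀) + ENNReal.ofReal (f (N + 1) - f N) :=
          ENNReal.ofReal_add_le
        _ ≤ ∑ i ∈ Ico N₀ N, a i + a N := add_le_add ih (hN₀ N hN)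
  refine top_le_iff.1 (le_of_tendsto (ENNReal.tendsto_ofReal_atTop.comp
    (tendsto_atTop_add_const_right _ (-f N₀) hf)) ?_)
  filter_upwards [eventually_ge_atTop N₀] with N hN
  rw [Function.comp_apply, ← sub_eq_add_neg]
  exact (hpartial N hN).trans (ENNReal.sum_le_tsum _)

theorem ae_frequently_lt_of_tsum_eq_top {Ω : Type*} [MeasurableSpace Ω] {μ : Measure Ω}
    {X : ℕ → Ω → ℝ} (hX : ∀ i, Measurable (X i)) (hindep : iIndepFun X μ) {w : ℕ → ℝ}
    (hsum : ∑' i, μ {ω | w i < X i ω} = ∞) : ∀ᵐ ω ∂μ, ∃ᶠ i in atTop, w i < X i ω := by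
  have := hindep.isProbabilityMeasure
  have hmeas : ∀ i, MeasurableSet {ω | w i < X i ω} := fun i => hX i measurableSet_Ioi
  have hindep_sets : iIndepSet (fun i => {ω | w i < X i ω}) μ :=
    (iIndepSet_iff_meas_biInter hmeas).2 fun s =>
      hindep.meas_biInter fun i _ => ⟨Set.Ioi (w i), measurableSet_Ioi, rfl⟩
  have hlimsup : ∀ᵐ ω ∂μ, ω ∈ limsup (fun i => {ω | w i < X i ω}) atTop :=
    (ae_mem_iff_measure_eq (MeasurableSet.measurableSet_limsup hmeas).nullMeasurableSet).2 <| by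
      rw [measure_limsup_eq_one hmeas hindep_sets hsum, measure_univ]
  filter_upwards [hlimsup] with ω hω using mem_limsup_iff_frequently_mem.1 hω

theorem eventually_apply_succ_le_two_mul {n : ℕ → ℕ} {η : ℝ} (hη : η ≤ 1)
    (h : ∀ᶠ k in atTop, ((n (k + 1) : ℝ) - n k) < (n k : ℝ) ^ η) :
    ∀ᶠ k in atTop, n (k + 1) ≤ 2 * n k := by
  filter_upwards [h] with k hk
  rcases Nat.eq_zero_or_pos (n k) with h0 | hpos
  · rw [h0, Nat.cast_zero, sub_zero] at hk
    have : (n (k + 1) : ℝ) < 1 := hk.trans_le (zero_rpow_le_one η)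
    have : n (k + 1) < 1 := by exact_mod_cast this
    omega
  · have := rpow_le_self_of_one_le (x := (n k : ℝ)) (by exact_mod_cast hpos) hη
    have : (n (k + 1) : ℝ) ≤ 2 * n k := by linarith
    exact_mod_cast this

theorem exists_tendsto_le_apply_le_two_mul {n : ℕ → ℕ} (hn : StrictMono n)
    (h : ∀ᶠ k in atTop, n (k + 1) ≤ 2 * n k) :
    ∃ κ : ℕ → ℕ, Tendsto κ atTop atTop ∧ (∀ i, i ≤ n (κ i)) ∧ ∀ᶠ i in atTop, n (κ i) ≤ 2 * i := by
  classical
  have hex : ∀ i, ∃ k, i ≤ n k := fun i => ⟨i, hn.le_apply⟩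
  have hgt : ∀ i k, n k < i → k < Nat.find (hex i) := fun i k hk =>
    hn.lt_iff_lt.1 (hk.trans_le (Nat.find_spec (hex i)))
  refine ⟨fun i => Nat.find (hex i), tendsto_atTop.2 fun k => ?_,
    fun i => Nat.find_spec (hex i), ?_⟩
  · filter_upwards [eventually_gt_atTop (n k)] with i hi using (hgt i k hi).le
  · obtain ⟨k₁, hk₁⟩ := eventually_atTop.1 h
    filter_upwards [eventually_gt_atTop (n k₁)] with i hi
    obtain ⟨k, hk⟩ : ∃ k, Nat.find (hex i) = k + 1 :=
      Nat.exists_eq_add_one.2 ((Nat.zero_le k₁).trans_lt (hgt i k₁ hi))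
    have hlt : n k < i := not_le.1 (Nat.find_min (hex i) (by omega))
    have := hk₁ k (by have := hgt i k₁ hi; omega)
    simp only [hk]; omega

theorem pareto_max_lower_bound_sparse_subsequence_general
    {Ω : Type*} [MeasureSpace Ω]
    (α ρ : ℝ) (hα : 0 < α) (hρ : ρ < 0)
    (X : ℕ → Ω → ℝ) (hmeas : ∀ i, Measurable (X i))
    (hindep : iIndepFun X ℙ)
    (hdist : ∀ i, ∀ x : ℝ, 1 ≤ x → ℙ {ω | x < X i ω} = ENNReal.ofReal (x ^ (-α)))
    (n : ℕ → ℕ) (hmono : StrictMono n)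
    (η : ℝ) (hη : η ∈ Set.Ioo (0 : ℝ) 1)
    (hsparse : ∀ᶠ k : ℕ in atTop, ((n (k + 1) : ℝ) - n k) < (n k : ℝ) ^ η) :
    ∀ᵐ ω ∂ℙ, ∃ᶠ k : ℕ in atTop, ∃ i ∈ Finset.Icc 1 (n k), paretoBound α ρ (n k) ≤ X i ω := by
  obtain ⟨κ, hκ, hle, hle_two⟩ :=
    exists_tendsto_le_apply_le_two_mul hmono (eventually_apply_succ_le_two_mul hη.2.le hsparse)
  set w : ℕ → ℝ := fun i => max (paretoBound α ρ (n (κ i))) 1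
  have hsum : ∑' i, ℙ {ω | w i < X i ω} = ∞ := by
    refine ENNReal.tsum_eq_top_of_ofReal_sub_le (f := fun i : ℕ => log^[4] (i : ℝ) / 16)
      (((tendsto_log_atTop.iterate 4).comp tendsto_natCast_atTop_atTop).atTop_div_const
        (by norm_num)) ?_
    filter_upwards [tendsto_natCast_atTop_atTop.eventually (eventually_one_le_iterate_log 4),
      hle_two] with i hi hi_two
    rw [hdist i _ (le_max_right _ _), Nat.cast_succ, ← sub_div]
    exact ENNReal.ofReal_le_ofReal
      (iterate_log_four_sub_le_paretoBound_rpow hα hρ.le hi (hle i) hi_two)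
  filter_upwards [ae_frequently_lt_of_tsum_eq_top hmeas hindep hsum] with ω hω
  refine hκ.frequently_map _ (fun i hi => ?_) (hω.and_eventually (eventually_ge_atTop 1))
  exact ⟨i, Finset.mem_Icc.2 ⟨hi.2, hle i⟩, (le_max_left _ _).trans hi.1.le⟩

theorem pareto_max_lower_bound_sparse_subsequence
    {Ω : Type*} [MeasureSpace Ω] [IsProbabilityMeasure (ℙ : Measure Ω)]
    (α ρ : ℝ) (hα : 0 < α) (hρ : ρ < 0)
    (X : ℕ → Ω → ℝ) (hmeas : ∀ i, Measurable (X i))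
    (hindep : iIndepFun X ℙ)
    (hdist : ∀ i, ∀ x : ℝ, 1 ≤ x → ℙ {ω | x < X i ω} = ENNReal.ofReal (x ^ (-α)))
    (n : ℕ → ℕ) (hmono : StrictMono n)
    (η : ℝ) (hη : η ∈ Set.Ioo (0 : ℝ) 1)
    (hsparse : ∀ᶠ k : ℕ in atTop, ((n (k + 1) : ℝ) - n k) < (n k : ℝ) ^ η) :
    ∀ᵐ ω ∂ℙ, ∃ᶠ k : ℕ in atTop, ∃ i ∈ Finset.Icc 1 (n k), paretoBound α ρ (n k) ≤ X i ω :=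
  pareto_max_lower_bound_sparse_subsequence_general α ρ hα hρ X hmeas hindep hdist n hmono η hη
    hsparse
end

section
/- Let $\{\xi(z):z\in\mathbb{Z}^d\}$ be i.i.d. with distribution function $F(x)=1-e^{-x^\gamma}$, $x\ge0$, for some $0<\gamma\le1$, and $M_r=\max_{|z|\le r}\xi(z)$. Then for every $\delta\in(0,1)$, almost surely, $M_r\le (d\log r)^{1/\gamma}+\gamma^{-1}(d\log r)^{1/\gamma-1}\log\log r+(\log r)^{1/\gamma-1}(\log\log r)^{\delta}$ eventually for all $r$. -/
open MeasureTheory ProbabilityTheory Filter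

/-- ℓ¹-norm of a lattice point, as a real number. -/
noncomputable def latticeNorm {d : ℕ} (z : Fin d → ℤ) : ℝ := ∑ j, |(z j : ℝ)|

open Real Finset Topology

/-!
Borel–Cantelli along the scales `r ≈ e^k`. Let `b_k` be the claimed bound at `log r = k`. The box
of radius `e^(k+1)` has at most `e^(dk+3d)` points, each exceeding `b_k` with probability
`exp (-b_k^γ)`. Concavity of `x ↦ x^γ` gives
`b_k^γ ≥ dk + log k + γ d^(1-1/γ) (log k)^δ - O((log k)^2 / k)`, so the expected number of
exceedances in block `k` is at most `exp (-κ (log k)^δ) / k` with `κ = γ d^(1-1/γ) / 2`, which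
is summable by Cauchy condensation. Since the bound is monotone in `r`, the block of `⌊log r⌋`
covers every radius `r`.
-/

lemma one_add_mul_div_le_one_add_rpow {γ u : ℝ} (hγ0 : 0 ≤ γ) (hγ1 : γ ≤ 1) (hu : 0 ≤ u) :
    1 + γ * (u / (1 + u)) ≤ (1 + u) ^ γ := by
  have hu1 : 0 < 1 + u := by linarith
  have hbern := rpow_one_add_le_one_add_mul_self (s := -(u / (1 + u)))
    (by rw [neg_le_neg_iff, div_le_one hu1]; linarith) hγ0 hγ1
  have hinv : 1 + -(u / (1 + u)) = (1 + u)⁻¹ := by field_simp; ring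
  rw [hinv, inv_rpow hu1.le] at hbern
  have hy : 1 ≤ (1 + u) ^ γ := one_le_rpow (by linarith) hγ0
  have hx : 0 ≤ γ * (u / (1 + u)) := by positivity
  rw [inv_le_iff_one_le_mul₀ (by positivity)] at hbern
  nlinarith

lemma eventually_add_sq_div_le_half_mul_log_rpow (A B : ℝ) {c δ : ℝ} (hc : 0 < c) (hδ : 0 < δ) :
    ∀ᶠ t in atTop, A + (log t + c * log t ^ δ) ^ 2 / (B * t) ≤ c / 2 * log t ^ δ := by
  have hW : (fun t => log t + c * log t ^ δ) =o[atTop] fun t => t ^ (1 / 2 : ℝ) :=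
    (isLittleO_log_rpow_atTop (by norm_num)).add
      ((isLittleO_log_rpow_rpow_atTop δ (by norm_num)).const_mul_left c)
  have hW2 : Tendsto (fun t => (log t + c * log t ^ δ) ^ 2 / (B * t)) atTop (𝓝 0) := by
    have h := ((hW.pow two_pos).tendsto_div_nhds_zero).div_const B
    rw [zero_div] at h
    refine h.congr' ?_
    filter_upwards [eventually_gt_atTop 0] with t ht
    rw [← rpow_mul_natCast ht.le, div_div, mul_comm B]
    norm_num
  have hlhs := (hW2.const_add A).eventually_le_const (lt_add_one _)
  have hrhs := (((tendsto_rpow_atTop hδ).comp tendsto_log_atTop).const_mul_atTop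
    (half_pos hc)).eventually_ge_atTop (A + 1)
  filter_upwards [hlhs, hrhs] with t h1 h2
  rw [add_zero] at h1
  exact h1.trans h2

lemma summable_exp_neg_mul_rpow {c δ : ℝ} (hc : 0 < c) (hδ : 0 < δ) :
    Summable fun n : ℕ => exp (-(c * (n : ℝ) ^ δ)) := by
  refine (summable_nat_pow_inv.mpr one_lt_two).of_norm_bounded_eventually_nat ?_
  have hlog := (isLittleO_log_rpow_atTop hδ).bound (half_pos hc)
  filter_upwards [tendsto_natCast_atTop_atTop.eventually hlog, eventually_ge_atTop 1]
    with n hn hn1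
  have hn0 : (0 : ℝ) < n := by exact_mod_cast hn1
  rw [norm_of_nonneg (log_nonneg (by exact_mod_cast hn1)),
    norm_of_nonneg (rpow_nonneg hn0.le δ)] at hn
  rw [norm_of_nonneg (exp_pos _).le, ← exp_log (pow_pos hn0 2), ← exp_neg, exp_le_exp,
    log_pow]
  push_cast
  linarith

lemma summable_exp_neg_mul_log_rpow_div {κ δ : ℝ} (hκ : 0 < κ) (hδ : 0 < δ) :
    Summable fun k : ℕ => exp (-(κ * log k ^ δ)) / k := by
  rw [← summable_condensed_iff_of_nonneg (fun k => by positivity) fun m n hm hmn => ?_]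
  · refine (summable_exp_neg_mul_rpow (mul_pos hκ (rpow_pos_of_pos (log_pos one_lt_two) δ))
      hδ).congr fun k => ?_
    push_cast
    rw [log_pow, mul_rpow (Nat.cast_nonneg k) (log_pos one_lt_two).le]
    field_simp
  · gcongr

lemma ae_eventually_forall_le_of_summable {Ω ι : Type*} [MeasurableSpace Ω] {μ : Measure Ω}
    [IsFiniteMeasure μ] (ξ : ι → Ω → ℝ) (S : ℕ → Finset ι) (b g : ℕ → ℝ) (hg : Summable g)
    (h : ∀ᶠ k in atTop, ∑ z ∈ S k, μ {ω | b k < ξ z ω} ≤ ENNReal.ofReal (g k)) :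
    ∀ᵐ ω ∂μ, ∀ᶠ k in atTop, ∀ z ∈ S k, ξ z ω ≤ b k := by
  set A : ℕ → Set Ω := fun k => ⋃ z ∈ S k, {ω | b k < ξ z ω}
  have hA : Summable fun k => μ.real (A k) := by
    refine hg.abs.of_norm_bounded_eventually_nat ?_
    filter_upwards [h] with k hk
    rw [norm_of_nonneg measureReal_nonneg, measureReal_def]
    exact ENNReal.toReal_le_of_le_ofReal (abs_nonneg _)
      (((measure_biUnion_finset_le _ _).trans hk).trans (ENNReal.ofReal_le_ofReal (le_abs_self _)))
  have htsum : ∑' k, μ (A k) ≠ ⊤ := by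
    have hofReal : ∀ k, μ (A k) = ENNReal.ofReal (μ.real (A k)) := fun k =>
      (ofReal_measureReal (measure_ne_top μ _)).symm
    simp_rw [hofReal]
    rw [← ENNReal.ofReal_tsum_of_nonneg (fun _ => measureReal_nonneg) hA]
    exact ENNReal.ofReal_ne_top
  filter_upwards [ae_eventually_notMem htsum] with ω hω
  filter_upwards [hω] with k hk z hz
  by_contra hlt
  exact hk (Set.mem_biUnion hz (not_le.1 hlt))

noncomputable def latticeBox (d n : ℕ) : Finset (Fin d → ℤ) :=
  Fintype.piFinset fun _ => Finset.Icc (-(n : ℤ)) n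

lemma card_latticeBox (d n : ℕ) : #(latticeBox d n) = (2 * n + 1) ^ d := by
  simp only [latticeBox, Fintype.card_piFinset, Int.card_Icc, prod_const, card_univ,
    Fintype.card_fin]
  congr 1
  omega

lemma mem_latticeBox_of_latticeNorm_le {d n : ℕ} {z : Fin d → ℤ} (hz : latticeNorm z ≤ n) :
    z ∈ latticeBox d n := by
  refine Fintype.mem_piFinset.2 fun j => mem_Icc.2 (abs_le.1 ?_)
  have hj : |(z j : ℝ)| ≤ n :=
    (single_le_sum (f := fun i => |(z i : ℝ)|) (fun i _ => abs_nonneg _) (mem_univ j)).trans hz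
  exact_mod_cast hj

lemma card_latticeBox_ceil_exp_le (d : ℕ) {s : ℝ} (hs : 0 ≤ s) :
    (#(latticeBox d ⌈exp (s + 1)⌉₊) : ℝ) ≤ exp (d * s + 3 * d) := by
  have hx : 1 ≤ exp (s + 1) := one_le_exp (by linarith)
  have hside : ((2 * ⌈exp (s + 1)⌉₊ + 1 : ℕ) : ℝ) ≤ exp (s + 3) := by
    have hceil := (Nat.ceil_lt_add_one (exp_pos (s + 1)).le).le
    have h5 : 5 ≤ exp 2 := by linarith [quadratic_le_exp_of_nonneg (zero_le_two (α := ℝ))]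
    have : exp (s + 3) = exp 2 * exp (s + 1) := by rw [← exp_add]; ring_nf
    push_cast
    nlinarith
  rw [card_latticeBox, Nat.cast_pow, show d * s + 3 * d = d * (s + 3) by ring, exp_nat_mul]
  gcongr

/-- At `t = log r` this is the bound of `weibull_field_max_upper_bound`. -/
noncomputable def weibullLevel (d : ℕ) (γ δ t : ℝ) : ℝ :=
  (d * t) ^ (1 / γ) + γ⁻¹ * (d * t) ^ (1 / γ - 1) * log t + t ^ (1 / γ - 1) * log t ^ δ

section weibullLevel

variable {d : ℕ} {γ δ : ℝ}

lemma weibullLevel_nonneg (hγ : 0 < γ) {t : ℝ} (ht : 1 ≤ t) : 0 ≤ weibullLevel d γ δ t := by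
  have := log_nonneg ht
  unfold weibullLevel
  positivity

lemma weibullLevel_mono (hγ0 : 0 < γ) (hγ1 : γ ≤ 1) (hδ : 0 ≤ δ) {s t : ℝ} (hs : 1 ≤ s)
    (hst : s ≤ t) : weibullLevel d γ δ s ≤ weibullLevel d γ δ t := by
  have hp : 0 ≤ 1 / γ - 1 := by rw [sub_nonneg, le_div_iff₀ hγ0]; linarith
  have := log_nonneg hs
  have ht : 0 ≤ t := by linarith
  unfold weibullLevel
  gcongr

lemma weibullLevel_eq_mul_one_add (hd : 0 < d) (hγ : 0 < γ) {t : ℝ} (ht : 0 < t) :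
    weibullLevel d γ δ t = (d * t) ^ (1 / γ)
      * (1 + (log t + γ * d ^ (1 - 1 / γ) * log t ^ δ) / (γ * d * t)) := by
  have hd' : (0 : ℝ) < d := by exact_mod_cast hd
  have hdt : (d * t) ^ (1 / γ) = (d * t) ^ (1 / γ - 1) * (d * t) := by
    rw [← rpow_add_one (by positivity)]; ring_nf
  have hdd : (d : ℝ) ^ (1 / γ - 1) * d ^ (1 - 1 / γ) = 1 := by
    rw [← rpow_add hd']; ring_nf; exact rpow_zero _
  have hT : (d * t) ^ (1 / γ - 1) * d ^ (1 - 1 / γ) = t ^ (1 / γ - 1) := by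
    rw [mul_rpow hd'.le ht.le, mul_right_comm, hdd, one_mul]
  unfold weibullLevel
  rw [hdt]
  set X := (d * t) ^ (1 / γ - 1)
  set D := (d : ℝ) ^ (1 - 1 / γ)
  set T := t ^ (1 / γ - 1)
  field_simp
  linear_combination (-(γ * log t ^ δ)) * hT

lemma le_weibullLevel_rpow (hd : 0 < d) (hγ0 : 0 < γ) (hγ1 : γ ≤ 1) {t : ℝ} (ht : 1 ≤ t) :
    d * t + (log t + γ * d ^ (1 - 1 / γ) * log t ^ δ)
        - (log t + γ * d ^ (1 - 1 / γ) * log t ^ δ) ^ 2 / (γ * d * t)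
      ≤ weibullLevel d γ δ t ^ γ := by
  set W := log t + γ * d ^ (1 - 1 / γ) * log t ^ δ
  have hd' : (0 : ℝ) < d := by exact_mod_cast hd
  have ht0 : 0 < t := by linarith
  have hW : 0 ≤ W := by have := log_nonneg ht; positivity
  set u := W / (γ * d * t)
  have hu : 0 ≤ u := by positivity
  rw [weibullLevel_eq_mul_one_add hd hγ0 ht0, mul_rpow (by positivity) (by positivity),
    ← rpow_mul (by positivity), one_div_mul_cancel hγ0.ne', rpow_one]
  calc d * t + W - W ^ 2 / (γ * d * t) = d * t * (1 + γ * (u - u ^ 2)) := by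
        simp only [u]; field_simp; ring
    _ ≤ d * t * (1 + γ * (u / (1 + u))) := by
        gcongr
        rw [le_div_iff₀ (by positivity)]
        nlinarith [sq_nonneg u]
    _ ≤ d * t * (1 + u) ^ γ := by
        gcongr
        exact one_add_mul_div_le_one_add_rpow hγ0.le hγ1 hu

/-- Half of the `log t ^ δ` term in `le_weibullLevel_rpow` pays for the factor `exp A` and for
the quadratic error term; the other half is what makes the bound summable. -/
lemma eventually_exp_mul_exp_neg_weibullLevel_le (A : ℝ) (hd : 0 < d) (hγ0 : 0 < γ)
    (hγ1 : γ ≤ 1) (hδ : 0 < δ) :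
    ∀ᶠ k : ℕ in atTop, exp (d * k + A) * exp (-(weibullLevel d γ δ k ^ γ))
      ≤ exp (-(γ * d ^ (1 - 1 / γ) / 2 * log k ^ δ)) / k := by
  have hc : 0 < γ * (d : ℝ) ^ (1 - 1 / γ) := by positivity
  filter_upwards [tendsto_natCast_atTop_atTop.eventually
    ((eventually_add_sq_div_le_half_mul_log_rpow A (γ * d) hc hδ).and
      (eventually_ge_atTop 1))] with k ⟨hk, hk1⟩
  have hlevel := le_weibullLevel_rpow (δ := δ) hd hγ0 hγ1 hk1
  calc exp (d * k + A) * exp (-(weibullLevel d γ δ k ^ γ))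
      = exp (d * k + A - weibullLevel d γ δ k ^ γ) := by rw [← exp_add]; ring_nf
    _ ≤ exp (-(γ * d ^ (1 - 1 / γ) / 2 * log k ^ δ) - log k) := exp_le_exp.2 (by linarith)
    _ = exp (-(γ * d ^ (1 - 1 / γ) / 2 * log k ^ δ)) / k := by
      rw [exp_sub, exp_log (by linarith)]

end weibullLevel

theorem weibull_field_max_upper_bound_general
    {Ω : Type*} [MeasureSpace Ω] [IsProbabilityMeasure (ℙ : Measure Ω)]
    (d : ℕ) (hd : 1 ≤ d) (γ : ℝ) (hγ : γ ∈ Set.Ioc (0 : ℝ) 1)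
    (ξ : (Fin d → ℤ) → Ω → ℝ)
    (hdist : ∀ z, ∀ x : ℝ, 0 ≤ x → ℙ {ω | x < ξ z ω} = ENNReal.ofReal (Real.exp (-(x ^ γ))))
    (δ : ℝ) (hδ : δ ∈ Set.Ioo (0 : ℝ) 1) :
    ∀ᵐ ω ∂ℙ, ∀ᶠ r : ℝ in atTop, ∀ z : Fin d → ℤ, latticeNorm z ≤ r →
      ξ z ω ≤ (d * Real.log r) ^ (1 / γ)
        + γ⁻¹ * (d * Real.log r) ^ (1 / γ - 1) * Real.log (Real.log r)
        + (Real.log r) ^ (1 / γ - 1) * (Real.log (Real.log r)) ^ δ := by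
  obtain ⟨hγ0, hγ1⟩ := hγ
  obtain ⟨hδ0, -⟩ := hδ
  have hκ : 0 < γ * (d : ℝ) ^ (1 - 1 / γ) / 2 := by positivity
  have htail : ∀ᶠ k : ℕ in atTop, ∑ z ∈ latticeBox d ⌈exp (k + 1)⌉₊,
      ℙ {ω | weibullLevel d γ δ k < ξ z ω}
        ≤ ENNReal.ofReal (exp (-(γ * d ^ (1 - 1 / γ) / 2 * log k ^ δ)) / k) := by
    filter_upwards [eventually_exp_mul_exp_neg_weibullLevel_le (3 * d) hd hγ0 hγ1 hδ0,
      eventually_ge_atTop 1] with k hk hk1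
    have hk1' : (1 : ℝ) ≤ k := by exact_mod_cast hk1
    rw [sum_congr rfl fun z _ => hdist z _ (weibullLevel_nonneg hγ0 hk1'), sum_const,
      nsmul_eq_mul, ← ENNReal.ofReal_natCast, ← ENNReal.ofReal_mul (Nat.cast_nonneg _)]
    exact ENNReal.ofReal_le_ofReal
      ((mul_le_mul_of_nonneg_right (card_latticeBox_ceil_exp_le d k.cast_nonneg)
        (exp_pos _).le).trans hk)
  filter_upwards [ae_eventually_forall_le_of_summable ξ _ _ _
    (summable_exp_neg_mul_log_rpow_div hκ hδ0) htail] with ω hω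
  filter_upwards [(tendsto_nat_floor_atTop.comp tendsto_log_atTop).eventually
    (hω.and (eventually_ge_atTop 1)), eventually_gt_atTop 0] with r ⟨hbox, hk1⟩ hr z hz
  have hr_le : r ≤ exp (⌊log r⌋₊ + 1) := (log_le_iff_le_exp hr).1 (Nat.lt_floor_add_one _).le
  have hz_box := mem_latticeBox_of_latticeNorm_le (hz.trans (hr_le.trans (Nat.le_ceil _)))
  exact (hbox z hz_box).trans (weibullLevel_mono hγ0 hγ1 hδ0.le (by exact_mod_cast hk1)
    (Nat.floor_le (by linarith [(Nat.one_le_floor_iff _).1 hk1])))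

theorem weibull_field_max_upper_bound
    {Ω : Type*} [MeasureSpace Ω] [IsProbabilityMeasure (ℙ : Measure Ω)]
    (d : ℕ) (hd : 1 ≤ d) (γ : ℝ) (hγ : γ ∈ Set.Ioc (0 : ℝ) 1)
    (ξ : (Fin d → ℤ) → Ω → ℝ) (hmeas : ∀ z, Measurable (ξ z))
    (hindep : iIndepFun ξ ℙ)
    (hdist : ∀ z, ∀ x : ℝ, 0 ≤ x → ℙ {ω | x < ξ z ω} = ENNReal.ofReal (Real.exp (-(x ^ γ))))
    (δ : ℝ) (hδ : δ ∈ Set.Ioo (0 : ℝ) 1) :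
    ∀ᵐ ω ∂ℙ, ∀ᶠ r : ℝ in atTop, ∀ z : Fin d → ℤ, latticeNorm z ≤ r →
      ξ z ω ≤ (d * Real.log r) ^ (1 / γ)
        + γ⁻¹ * (d * Real.log r) ^ (1 / γ - 1) * Real.log (Real.log r)
        + (Real.log r) ^ (1 / γ - 1) * (Real.log (Real.log r)) ^ δ :=
  weibull_field_max_upper_bound_general d hd γ hγ ξ hdist δ hδ
end

section
/- Let $\{\xi(z):z\in\mathbb{Z}^d\}$ be i.i.d. with distribution function $F(x)=1-e^{-x^\gamma}$, $x\ge0$, $0<\gamma\le1$, and $M_r=\max_{|z|\le r}\xi(z)$. Then almost surely $M_r\ge (d\log r)^{1/\gamma}+\gamma^{-1}(d\log r)^{1/\gamma-1}\log\log r$ for infinitely many $r$ (i.e., for a sequence $r_n\to\infty$). -/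
/-!
The dyadic cubes `Q k = [2^k, 2^(k+1))^d` are pairwise disjoint, contain `2^(kd)` lattice points
and lie in the ℓ¹-ball of radius `r k = 4d·2^k`. Writing `t r` for the threshold, Bernoulli's
inequality gives `(t r)^γ ≤ d log r + log log r`, so each site of `Q k` exceeds `t (r k)` with
probability at least `1 / (r k ^ d * log (r k))`, and the cube `Q k` carries total probability
of order `1 / k`. These events are independent and their probabilities sum to `∞`, so by the
second Borel–Cantelli lemma infinitely many of them occur almost surely; each one is a site in
the ball of radius `r k` above `t (r k)`, and `r k → ∞`.
-/

open MeasureTheory ProbabilityTheory Filter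

theorem ENNReal.tsum_ofReal_div_succ_eq_top {c : ℝ} (hc : 0 < c) :
    ∑' k : ℕ, ENNReal.ofReal (c / (k + 1)) = ⊤ := by
  by_contra h
  have hsum : Summable fun k : ℕ => c / (k + 1) :=
    (ENNReal.summable_toReal h).congr fun k => ENNReal.toReal_ofReal (by positivity)
  refine Real.not_summable_one_div_natCast ((summable_nat_add_iff 1).1 ?_)
  refine (hsum.mul_left c⁻¹).congr fun k => ?_
  push_cast
  field_simp

theorem ProbabilityTheory.iIndepFun.iIndepSet_preimage {Ω ι β : Type*} [MeasurableSpace Ω]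
    [MeasurableSpace β] {μ : Measure Ω} {f : ι → Ω → β} (hf : iIndepFun f μ)
    (hmeas : ∀ i, Measurable (f i)) {S : ι → Set β} (hS : ∀ i, MeasurableSet (S i)) :
    iIndepSet (fun i => f i ⁻¹' S i) μ :=
  (iIndepSet_iff_meas_biInter fun i => hmeas i (hS i)).2 fun _ =>
    hf.meas_biInter fun i _ => ⟨S i, hS i, rfl⟩

theorem ProbabilityTheory.ae_frequently_cofinite_mem_of_iIndepSet {Ω ι : Type*}
    [MeasurableSpace Ω] [Countable ι] {μ : Measure Ω} {s : ι → Set Ω}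
    (hsm : ∀ i, MeasurableSet (s i)) (hs : iIndepSet s μ) (hsum : ∑' i, μ (s i) = ⊤) :
    ∀ᵐ ω ∂μ, ∃ᶠ i in cofinite, ω ∈ s i := by
  have := hs.isProbabilityMeasure
  have : Infinite ι := by
    by_contra hfin
    rw [not_infinite_iff_finite] at hfin
    have := Fintype.ofFinite ι
    rw [tsum_fintype] at hsum
    exact ENNReal.sum_ne_top.2 (fun i _ => measure_ne_top μ (s i)) hsum
  have := (nonempty_denumerable ι).some
  let e : ℕ ≃ ι := (Denumerable.eqv ι).symm
  have hlimsup : μ (limsup (s ∘ e) atTop) = 1 :=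
    measure_limsup_eq_one (fun n => hsm (e n)) (hs.precomp e.injective)
      (by rwa [Function.comp_def, e.tsum_eq (fun i => μ (s i))])
  filter_upwards [(mem_ae_iff_prob_eq_one (.measurableSet_limsup fun n => hsm (e n))).2 hlimsup]
    with ω hω
  rw [mem_limsup_iff_frequently_mem, ← Nat.cofinite_eq_atTop] at hω
  exact e.injective.tendsto_cofinite.frequently hω

-- The base is the tangent-line approximation of `(D + ℓ) ^ (1 / γ)` at `D`.
theorem tangent_rpow_one_div_rpow_le {γ D ℓ : ℝ} (hγ0 : 0 < γ) (hγ1 : γ ≤ 1) (hD : 0 < D)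
    (hℓ : 0 ≤ ℓ) : (D ^ (1 / γ) + γ⁻¹ * D ^ (1 / γ - 1) * ℓ) ^ γ ≤ D + ℓ := by
  have hx : 0 ≤ ℓ / (γ * D) := by positivity
  have hfactor :
      D ^ (1 / γ) + γ⁻¹ * D ^ (1 / γ - 1) * ℓ = D ^ (1 / γ) * (1 + ℓ / (γ * D)) := by
    rw [Real.rpow_sub hD, Real.rpow_one]
    field_simp
  calc (D ^ (1 / γ) + γ⁻¹ * D ^ (1 / γ - 1) * ℓ) ^ γ
      = D * (1 + ℓ / (γ * D)) ^ γ := by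
        rw [hfactor, Real.mul_rpow (by positivity) (by positivity), ← Real.rpow_mul hD.le,
          one_div_mul_cancel hγ0.ne', Real.rpow_one]
    _ ≤ D * (1 + γ * (ℓ / (γ * D))) := by
        gcongr
        exact rpow_one_add_le_one_add_mul_self (by linarith) hγ0.le hγ1
    _ = D + ℓ := by field_simp

theorem div_succ_le_two_pow_pow_mul_inv (d k : ℕ) {c : ℝ} (hc : 2 ≤ c) :
    (c ^ d * Real.log c)⁻¹ / (k + 1)
      ≤ (2 ^ k) ^ d * ((c * 2 ^ k) ^ d * Real.log (c * 2 ^ k))⁻¹ := by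
  have hc0 : 0 < Real.log c := Real.log_pos (by linarith)
  have hlog : Real.log (c * 2 ^ k) ≤ (k + 1) * Real.log c := by
    have : Real.log 2 ≤ Real.log c := Real.log_le_log (by norm_num) hc
    rw [Real.log_mul (by positivity) (by positivity), Real.log_pow]
    nlinarith [Real.log_pos (by norm_num : (1 : ℝ) < 2)]
  have hlog0 : 0 < Real.log (c * 2 ^ k) :=
    Real.log_pos (by nlinarith [one_le_pow₀ (M₀ := ℝ) (a := 2) (n := k) (by norm_num)])
  rw [mul_pow, div_eq_mul_inv, ← mul_inv]
  calc ((c ^ d * Real.log c) * (k + 1))⁻¹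
      ≤ (c ^ d * Real.log (c * 2 ^ k))⁻¹ := by
        rw [mul_assoc]
        gcongr
        linarith
    _ = (2 ^ k) ^ d * (c ^ d * (2 ^ k) ^ d * Real.log (c * 2 ^ k))⁻¹ := by
        field_simp

theorem ENNReal.tsum_sigma_eq_top_of_block_bound {β : ℕ → Type*} [∀ k, Fintype (β k)]
    {f : (Σ k, β k) → ENNReal} {q : ℕ → ℝ} {c : ℝ} (hc : 0 < c)
    (hq : ∀ k, c / (k + 1) ≤ Fintype.card (β k) * q k)
    (hf : ∀ p, ENNReal.ofReal (q p.1) ≤ f p) : ∑' p, f p = ⊤ := by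
  refine top_unique ((tsum_ofReal_div_succ_eq_top hc).ge.trans ?_)
  rw [ENNReal.tsum_sigma']
  refine ENNReal.tsum_le_tsum fun k => ?_
  calc ENNReal.ofReal (c / (k + 1)) ≤ ENNReal.ofReal (Fintype.card (β k) * q k) :=
        ENNReal.ofReal_le_ofReal (hq k)
    _ = ∑ b : β k, ENNReal.ofReal (q k) := by
        rw [ENNReal.ofReal_mul (Nat.cast_nonneg _)]
        simp
    _ ≤ ∑' b, f ⟨k, b⟩ := by
        rw [tsum_fintype]
        exact Finset.sum_le_sum fun b _ => hf ⟨k, b⟩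

theorem tendsto_sigma_fst_cofinite_atTop {β : ℕ → Type*} [∀ k, Finite (β k)] :
    Tendsto (Sigma.fst : (Σ k, β k) → ℕ) cofinite atTop := by
  rw [← Nat.cofinite_eq_atTop]
  refine Tendsto.cofinite_of_finite_preimage_singleton fun k => ?_
  rw [← Set.range_sigmaMk]
  infer_instance

noncomputable def weibullThreshold (d : ℕ) (γ r : ℝ) : ℝ :=
  (d * Real.log r) ^ (1 / γ) + γ⁻¹ * (d * Real.log r) ^ (1 / γ - 1) * Real.log (Real.log r)

section WeibullThreshold

variable {d : ℕ} {γ r : ℝ}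

theorem weibullThreshold_nonneg (hγ : 0 < γ) (hr : Real.exp 1 ≤ r) :
    0 ≤ weibullThreshold d γ r := by
  have hlog : 1 ≤ Real.log r := (Real.le_log_iff_exp_le ((Real.exp_pos 1).trans_le hr)).2 hr
  unfold weibullThreshold
  have := Real.log_nonneg hlog
  positivity

theorem inv_pow_mul_log_le_exp_neg_weibullThreshold_rpow (hd : 0 < d) (hγ0 : 0 < γ)
    (hγ1 : γ ≤ 1) (hr : Real.exp 1 ≤ r) :
    (r ^ d * Real.log r)⁻¹ ≤ Real.exp (-weibullThreshold d γ r ^ γ) := by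
  have hr0 : 0 < r := (Real.exp_pos 1).trans_le hr
  have hlog : 1 ≤ Real.log r := (Real.le_log_iff_exp_le hr0).2 hr
  have hbound : weibullThreshold d γ r ^ γ ≤ d * Real.log r + Real.log (Real.log r) :=
    tangent_rpow_one_div_rpow_le hγ0 hγ1 (mul_pos (by exact_mod_cast hd) (by linarith))
      (Real.log_nonneg hlog)
  calc (r ^ d * Real.log r)⁻¹ = Real.exp (-(d * Real.log r + Real.log (Real.log r))) := by
        rw [Real.exp_neg, Real.exp_add, Real.exp_nat_mul, Real.exp_log hr0,
          Real.exp_log (by positivity)]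
    _ ≤ Real.exp (-weibullThreshold d γ r ^ γ) := by gcongr

theorem ofReal_inv_pow_mul_log_le_measure_weibullThreshold_lt {Ω : Type*} [MeasurableSpace Ω]
    {μ : Measure Ω} {X : Ω → ℝ} (hd : 0 < d) (hγ0 : 0 < γ) (hγ1 : γ ≤ 1)
    (hX : ∀ x : ℝ, 0 ≤ x → μ {ω | x < X ω} = ENNReal.ofReal (Real.exp (-(x ^ γ))))
    (hr : Real.exp 1 ≤ r) :
    ENNReal.ofReal ((r ^ d * Real.log r)⁻¹) ≤ μ {ω | weibullThreshold d γ r < X ω} := by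
  rw [hX _ (weibullThreshold_nonneg hγ0 hr)]
  exact ENNReal.ofReal_le_ofReal (inv_pow_mul_log_le_exp_neg_weibullThreshold_rpow hd hγ0 hγ1 hr)

end WeibullThreshold

theorem Nat.log_two_pow_add {k a : ℕ} (ha : a < 2 ^ k) : Nat.log 2 (2 ^ k + a) = k :=
  Nat.log_eq_of_pow_le_of_lt_pow (by omega) (by rw [pow_succ]; omega)

def dyadicCubePoint {d : ℕ} (k : ℕ) (a : Fin d → Fin (2 ^ k)) : Fin d → ℤ :=
  fun j => (2 ^ k + a j : ℕ)

theorem dyadicCubePoint_injective {d : ℕ} (hd : 0 < d) :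
    Function.Injective fun p : (Σ k, Fin d → Fin (2 ^ k)) => dyadicCubePoint p.1 p.2 := by
  rintro ⟨k, a⟩ ⟨k', a'⟩ h
  have hcoord (j : Fin d) : 2 ^ k + (a j : ℕ) = 2 ^ k' + a' j := by
    have := congrFun h j
    simp only [dyadicCubePoint] at this
    exact_mod_cast this
  obtain rfl : k = k' := by
    rw [← Nat.log_two_pow_add (a ⟨0, hd⟩).isLt, hcoord,
      Nat.log_two_pow_add (a' ⟨0, hd⟩).isLt]
  obtain rfl : a = a' := funext fun j => Fin.ext (by have := hcoord j; omega)
  rfl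

noncomputable def dyadicRadius (d k : ℕ) : ℝ := 4 * d * 2 ^ k

theorem exp_one_le_dyadicRadius {d : ℕ} (hd : 0 < d) (k : ℕ) :
    Real.exp 1 ≤ dyadicRadius d k := by
  have hd' : (1 : ℝ) ≤ d := by exact_mod_cast hd
  have := one_le_pow₀ (M₀ := ℝ) (a := 2) (n := k) (by norm_num)
  rw [dyadicRadius]
  nlinarith [Real.exp_one_lt_d9]

theorem tendsto_dyadicRadius_atTop {d : ℕ} (hd : 0 < d) : Tendsto (dyadicRadius d) atTop atTop :=
  (tendsto_pow_atTop_atTop_of_one_lt one_lt_two).const_mul_atTop (by positivity)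

theorem latticeNorm_dyadicCubePoint_le {d : ℕ} (k : ℕ) (a : Fin d → Fin (2 ^ k)) :
    latticeNorm (dyadicCubePoint k a) ≤ dyadicRadius d k := by
  have hcoord (j : Fin d) : |((dyadicCubePoint k a j : ℤ) : ℝ)| ≤ 4 * 2 ^ k := by
    have : (2 ^ k + a j : ℕ) ≤ 4 * 2 ^ k := by have := (a j).isLt; omega
    rw [dyadicCubePoint, Int.cast_natCast, abs_of_nonneg (Nat.cast_nonneg _)]
    exact_mod_cast this
  calc latticeNorm (dyadicCubePoint k a) ≤ ∑ _j : Fin d, (4 * 2 ^ k : ℝ) :=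
        Finset.sum_le_sum fun j _ => hcoord j
    _ = dyadicRadius d k := by simp [dyadicRadius]; ring

theorem weibull_field_max_lower_bound_infinitely_often_general
    {Ω : Type*} [MeasureSpace Ω]
    (d : ℕ) (hd : 1 ≤ d) (γ : ℝ) (hγ : γ ∈ Set.Ioc (0 : ℝ) 1)
    (ξ : (Fin d → ℤ) → Ω → ℝ) (hmeas : ∀ z, Measurable (ξ z))
    (hindep : iIndepFun ξ ℙ)
    (hdist : ∀ z, ∀ x : ℝ, 0 ≤ x → ℙ {ω | x < ξ z ω} = ENNReal.ofReal (Real.exp (-(x ^ γ)))) :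
    ∀ᵐ ω ∂ℙ, ∃ᶠ r : ℝ in atTop,
      ∃ z : Fin d → ℤ, latticeNorm z ≤ r ∧
        (d * Real.log r) ^ (1 / γ)
          + γ⁻¹ * (d * Real.log r) ^ (1 / γ - 1) * Real.log (Real.log r) ≤ ξ z ω := by
  obtain ⟨hγ0, hγ1⟩ := hγ
  set A : (Σ k, Fin d → Fin (2 ^ k)) → Set Ω := fun p =>
    ξ (dyadicCubePoint p.1 p.2) ⁻¹' Set.Ioi (weibullThreshold d γ (dyadicRadius d p.1))
  have hA_indep : iIndepSet A ℙ :=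
    (hindep.precomp (dyadicCubePoint_injective hd)).iIndepSet_preimage (fun _ => hmeas _)
      fun _ => measurableSet_Ioi
  have hA_sum : ∑' p, ℙ (A p) = ⊤ := by
    have hd' : (1 : ℝ) ≤ d := by exact_mod_cast hd
    have hc : (2 : ℝ) ≤ 4 * d := by linarith
    have := Real.log_pos (by linarith : (1 : ℝ) < 4 * d)
    refine ENNReal.tsum_sigma_eq_top_of_block_bound (c := ((4 * d) ^ d * Real.log (4 * d))⁻¹)
      (q := fun k => (dyadicRadius d k ^ d * Real.log (dyadicRadius d k))⁻¹) (by positivity)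
      (fun k => by simpa [dyadicRadius] using div_succ_le_two_pow_pow_mul_inv d k hc) fun p =>
        ofReal_inv_pow_mul_log_le_measure_weibullThreshold_lt hd hγ0 hγ1 (hdist _)
          (exp_one_le_dyadicRadius hd _)
  filter_upwards [ae_frequently_cofinite_mem_of_iIndepSet (fun _ => hmeas _ measurableSet_Ioi)
    hA_indep hA_sum] with ω hω
  exact ((tendsto_dyadicRadius_atTop hd).comp tendsto_sigma_fst_cofinite_atTop).frequently
    (hω.mono fun p hp => ⟨_, latticeNorm_dyadicCubePoint_le p.1 p.2, hp.le⟩)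

theorem weibull_field_max_lower_bound_infinitely_often
    {Ω : Type*} [MeasureSpace Ω] [IsProbabilityMeasure (ℙ : Measure Ω)]
    (d : ℕ) (hd : 1 ≤ d) (γ : ℝ) (hγ : γ ∈ Set.Ioc (0 : ℝ) 1)
    (ξ : (Fin d → ℤ) → Ω → ℝ) (hmeas : ∀ z, Measurable (ξ z))
    (hindep : iIndepFun ξ ℙ)
    (hdist : ∀ z, ∀ x : ℝ, 0 ≤ x → ℙ {ω | x < ξ z ω} = ENNReal.ofReal (Real.exp (-(x ^ γ)))) :
    ∀ᵐ ω ∂ℙ, ∃ᶠ r : ℝ in atTop,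
      ∃ z : Fin d → ℤ, latticeNorm z ≤ r ∧
        (d * Real.log r) ^ (1 / γ)
          + γ⁻¹ * (d * Real.log r) ^ (1 / γ - 1) * Real.log (Real.log r) ≤ ξ z ω :=
  weibull_field_max_lower_bound_infinitely_often_general d hd γ hγ ξ hmeas hindep hdist
end

section
/- Let $\{\xi(z):z\in\mathbb{Z}^d\}$ be random variables with values in $[0,\infty)$, unbounded from above (i.e. $\sup_z\xi(z)=\infty$ along $M_r\to\infty$), and suppose for some $\eta\in(0,1)$ that $M_r:=\max_{|z|\le r}\xi(z)\le r^\eta$ for all sufficiently large $r$. Define $\underline N(t)=\max_{r>0}[M_r-\frac{r}{t}\log M_r]$. Then for all sufficiently large $t$, $\underline N(t)=\max_{z\in\mathbb{Z}^d}[\xi(z)-\frac{|z|}{t}\log_+\xi(z)]$, where $\log_+ x=\log(x\vee1)$. -/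
open Filter
lemma latticeNorm_nonneg {d : ℕ} (z : Fin d → ℤ) : 0 ≤ latticeNorm z :=
  Finset.sum_nonneg fun _ _ => abs_nonneg _

lemma latticeNorm_exists_nat {d : ℕ} (z : Fin d → ℤ) : ∃ n : ℕ, latticeNorm z = n := by
  refine ⟨∑ j, (z j).natAbs, ?_⟩
  rw [latticeNorm]
  push_cast [Nat.cast_natAbs]
  rfl

lemma one_le_latticeNorm {d : ℕ} {z : Fin d → ℤ} (hz : z ≠ 0) : 1 ≤ latticeNorm z := by
  obtain ⟨j, hj⟩ := Function.ne_iff.mp hz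
  have h1 : (1:ℝ) ≤ |(z j : ℝ)| := by
    have := Int.one_le_abs (by simpa using hj)
    exact_mod_cast this
  exact h1.trans (Finset.single_le_sum (f := fun j => |(z j : ℝ)|)
    (fun i _ => abs_nonneg _) (Finset.mem_univ j))

lemma latticeNorm_zero {d : ℕ} : latticeNorm (0 : Fin d → ℤ) = 0 := by simp [latticeNorm]

lemma log_le_logplus {x : ℝ} (hx : 0 ≤ x) : Real.log x ≤ Real.log (max x 1) := by
  rcases le_total x 1 with h|h
  · rw [max_eq_right h]; simpa using Real.log_nonpos hx h
  · rw [max_eq_left h]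

lemma logplus_nonneg (x : ℝ) : 0 ≤ Real.log (max x 1) := Real.log_nonneg (le_max_right _ _)

lemma logplus_mono {a b : ℝ} (hab : a ≤ b) :
    Real.log (max a 1) ≤ Real.log (max b 1) :=
  Real.log_le_log (by positivity) (max_le_max hab le_rfl)

lemma logplus_sub_le {a b : ℝ} (hab : a ≤ b) :
    Real.log (max b 1) - Real.log (max a 1) ≤ b - a := by
  have ha1 : (1:ℝ) ≤ max a 1 := le_max_right _ _
  have hab1 : max a 1 ≤ max b 1 := max_le_max hab le_rfl
  have h1 : Real.log (max b 1) - Real.log (max a 1) = Real.log (max b 1 / max a 1) :=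
    (Real.log_div (by positivity) (by positivity)).symm
  have h2 : Real.log (max b 1 / max a 1) ≤ max b 1 / max a 1 - 1 :=
    Real.log_le_sub_one_of_pos (by positivity)
  have h3 : max b 1 / max a 1 - 1 ≤ max b 1 - max a 1 := by
    rw [div_sub_one (by positivity)]
    exact div_le_self (by linarith) ha1
  have h4 : max b 1 - max a 1 ≤ b - a := by
    rcases max_cases b 1 with ⟨hb1, hb2⟩ | ⟨hb1, hb2⟩ <;>
      rcases max_cases a 1 with ⟨hA1, hA2⟩ | ⟨hA1, hA2⟩ <;> rw [hb1, hA1] <;> linarith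
  linarith

theorem underlineN_eq_max_over_field
    (d : ℕ) (hd : 1 ≤ d) (η : ℝ) (hη : η ∈ Set.Ioo (0 : ℝ) 1)
    (ξ : (Fin d → ℤ) → ℝ) (hξ : ∀ z, 0 ≤ ξ z)
    (M : ℝ → ℝ)
    (hM : ∀ r > 0, IsGreatest {x | ∃ z : Fin d → ℤ, latticeNorm z ≤ r ∧ ξ z = x} (M r))
    (hMtop : Tendsto M atTop atTop)
    (hMgrow : ∀ᶠ r : ℝ in atTop, M r ≤ r ^ η)
    (N : ℝ → ℝ)
    (hN : ∀ t > 0, IsGreatest {v | ∃ r > 0, v = M r - r / t * Real.log (M r)} (N t)) :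
    ∀ᶠ t : ℝ in atTop,
      IsGreatest {v | ∃ z : Fin d → ℤ,
        v = ξ z - latticeNorm z / t * Real.log (max (ξ z) 1)} (N t) := by
  have hMub : ∀ r > 0, ∀ z : Fin d → ℤ, latticeNorm z ≤ r → ξ z ≤ M r :=
    fun r hr z hz => (hM r hr).2 ⟨z, hz, rfl⟩
  have hMmono : ∀ r s : ℝ, 0 < r → r ≤ s → M r ≤ M s := by
    intro r s hr hrs
    obtain ⟨z, hz, hze⟩ := (hM r hr).1
    exact hze ▸ hMub s (hr.trans_le hrs) z (hz.trans hrs)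
  have hM0 : ∀ r > 0, 0 ≤ M r := by
    intro r hr; obtain ⟨z, _, hze⟩ := (hM r hr).1; exact hze ▸ hξ z
  have hMlt1 : ∀ r, 0 < r → r < 1 → M r = ξ 0 := by
    intro r hr hr1
    obtain ⟨z, hz, hze⟩ := (hM r hr).1
    have hz0 : z = 0 := by
      by_contra h
      exact absurd (le_trans (one_le_latticeNorm h) hz) (not_le.mpr hr1)
    rw [hz0] at hze; exact hze.symm
  have hMstep : ∀ r : ℝ, 1 ≤ r → M r = M (⌊r⌋₊ : ℝ) := by
    intro r hr
    have hr0 : (0:ℝ) < r := lt_of_lt_of_le one_pos hr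
    have hfl : 1 ≤ ⌊r⌋₊ := Nat.le_floor (by exact_mod_cast hr)
    have hset : {x | ∃ z : Fin d → ℤ, latticeNorm z ≤ r ∧ ξ z = x}
        = {x | ∃ z : Fin d → ℤ, latticeNorm z ≤ (⌊r⌋₊ : ℝ) ∧ ξ z = x} := by
      ext x; constructor <;> rintro ⟨z, hz, rfl⟩
      · obtain ⟨n, hn⟩ := latticeNorm_exists_nat z
        refine ⟨z, ?_, rfl⟩
        rw [hn] at hz ⊢
        exact_mod_cast Nat.le_floor hz
      · exact ⟨z, hz.trans (Nat.floor_le hr0.le), rfl⟩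
    refine (hM r hr0).unique ?_
    rw [hset]
    exact hM _ (by exact_mod_cast hfl)
  have hNlb : ∀ t : ℝ, 0 < t → ξ 0 ≤ N t := by
    intro t ht
    have hub := (hN t ht).2
    by_contra hcon
    push_neg at hcon
    set ε := (ξ 0 - N t) / 2 with hε
    have hε0 : 0 < ε := by simp only [hε]; linarith
    set L := |Real.log (ξ 0)| with hL
    have hL0 : 0 ≤ L := abs_nonneg _
    set r := min (1/2 : ℝ) (ε * t / (L + 1)) with hrdef
    have hr0 : 0 < r := lt_min (by norm_num) (by positivity)
    have hr1 : r < 1 := lt_of_le_of_lt (min_le_left _ _) (by norm_num)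
    have hMr : M r = ξ 0 := hMlt1 r hr0 hr1
    have h1 : M r - r / t * Real.log (M r) ≤ N t := hub ⟨r, hr0, rfl⟩
    rw [hMr] at h1
    have hrle : r ≤ ε * t / (L + 1) := min_le_right _ _
    have hrt : r / t ≤ ε / (L + 1) := by
      rw [div_le_div_iff₀ ht (by positivity)]
      calc r * (L + 1) ≤ (ε * t / (L + 1)) * (L + 1) :=
            mul_le_mul_of_nonneg_right hrle (by positivity)
        _ = ε * t := by field_simp
    have h2 : r / t * Real.log (ξ 0) ≤ ε := by
      calc r / t * Real.log (ξ 0) ≤ r / t * L :=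
            mul_le_mul_of_nonneg_left (le_abs_self _) (by positivity)
        _ ≤ ε / (L + 1) * L := mul_le_mul_of_nonneg_right hrt hL0
        _ ≤ ε := by
            rw [div_mul_eq_mul_div, div_le_iff₀ (by positivity)]
            nlinarith
    simp only [hε] at h2
    linarith
  obtain ⟨r₀, hr₀M, hr₀1⟩ : ∃ r₀ : ℝ, 4 ≤ M r₀ ∧ 1 ≤ r₀ := by
    obtain ⟨r₀, h⟩ := ((hMtop.eventually_ge_atTop 4).and (eventually_ge_atTop 1)).exists
    exact ⟨r₀, h.1, h.2⟩
  have hr₀0 : (0:ℝ) < r₀ := lt_of_lt_of_le one_pos hr₀1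
  set R := ⌈r₀⌉₊ with hR
  set B := |Real.log (ξ 0)| + ∑ n ∈ Finset.range (R + 1), |Real.log (M (n : ℝ))| with hB
  have hB0 : 0 ≤ B :=
    add_nonneg (abs_nonneg _) (Finset.sum_nonneg fun _ _ => abs_nonneg _)
  have hBbound : ∀ r : ℝ, 0 < r → r < r₀ → |Real.log (M r)| ≤ B := by
    intro r hr hrr
    rcases lt_or_ge r 1 with h1 | h1
    · rw [hMlt1 r hr h1]
      exact le_add_of_nonneg_right (Finset.sum_nonneg fun _ _ => abs_nonneg _)
    · rw [hMstep r h1]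
      have hmem : ⌊r⌋₊ ∈ Finset.range (R + 1) := by
        rw [Finset.mem_range, Nat.lt_succ_iff, hR]
        exact le_trans (Nat.floor_le_floor hrr.le) (Nat.floor_le_ceil r₀)
      calc |Real.log (M (⌊r⌋₊ : ℝ))|
          ≤ ∑ n ∈ Finset.range (R + 1), |Real.log (M (n : ℝ))| :=
            Finset.single_le_sum (f := fun n : ℕ => |Real.log (M (n : ℝ))|) (fun i _ => abs_nonneg _) hmem
        _ ≤ B := le_add_of_nonneg_left (abs_nonneg _)
  set T := max (max 1 (r₀ * (|Real.log (M r₀)| + 1))) (r₀ * (B + 1)) with hT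
  filter_upwards [eventually_ge_atTop T] with t hTt
  have ht1 : (1:ℝ) ≤ t := le_trans (le_trans (le_max_left _ _) (le_max_left _ _)) hTt
  have ht0 : (0:ℝ) < t := lt_of_lt_of_le one_pos ht1
  have htA : r₀ * (|Real.log (M r₀)| + 1) ≤ t :=
    le_trans (le_trans (le_max_right _ _) (le_max_left _ _)) hTt
  have htB : r₀ * (B + 1) ≤ t := le_trans (le_max_right _ _) hTt
  have hNub : ∀ r : ℝ, 0 < r → M r - r / t * Real.log (M r) ≤ N t :=
    fun r hr => (hN t ht0).2 ⟨r, hr, rfl⟩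
  have hN3 : 3 ≤ N t := by
    have h := hNub r₀ hr₀0
    have h2 : r₀ / t * Real.log (M r₀) ≤ 1 := by
      have h1 : r₀ / t * Real.log (M r₀) ≤ r₀ / t * |Real.log (M r₀)| :=
        mul_le_mul_of_nonneg_left (le_abs_self _) (by positivity)
      have h3 : r₀ * |Real.log (M r₀)| ≤ t := by nlinarith [abs_nonneg (Real.log (M r₀))]
      have h4 : r₀ / t * |Real.log (M r₀)| ≤ 1 := by
        rw [div_mul_eq_mul_div, div_le_one ht0]; exact h3
      linarith
    linarith
  have hNξ0 : ξ 0 ≤ N t := hNlb t ht0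
  have hN0 : 0 ≤ N t := le_trans (hξ 0) hNξ0
  -- Part A : upper bound
  have hA : ∀ z : Fin d → ℤ, ξ z - latticeNorm z / t * Real.log (max (ξ z) 1) ≤ N t := by
    intro z
    have hs0 : 0 ≤ latticeNorm z := latticeNorm_nonneg z
    rcases lt_or_ge (latticeNorm z) 1 with hslt | hs1
    · have hz0 : z = 0 := by
        by_contra h; exact absurd (one_le_latticeNorm h) (not_le.mpr hslt)
      rw [hz0, latticeNorm_zero]
      simpa using hNξ0
    rcases le_total (latticeNorm z) t with hst | hst
    · -- 1 ≤ s ≤ t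
      have hsp : (0:ℝ) < latticeNorm z := lt_of_lt_of_le one_pos hs1
      have hMs := hMub (latticeNorm z) hsp z le_rfl
      have h1 := hNub (latticeNorm z) hsp
      have h2 : Real.log (M (latticeNorm z)) ≤ Real.log (max (M (latticeNorm z)) 1) :=
        log_le_logplus (hM0 _ hsp)
      have h3 : Real.log (max (M (latticeNorm z)) 1) - Real.log (max (ξ z) 1)
          ≤ M (latticeNorm z) - ξ z := logplus_sub_le hMs
      have h4 : 0 ≤ Real.log (max (M (latticeNorm z)) 1) - Real.log (max (ξ z) 1) := by
        have := logplus_mono hMs; linarith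
      have hst1 : latticeNorm z / t ≤ 1 := (div_le_one ht0).mpr hst
      have h5 : latticeNorm z / t *
          (Real.log (max (M (latticeNorm z)) 1) - Real.log (max (ξ z) 1))
          ≤ M (latticeNorm z) - ξ z := by
        calc _ ≤ 1 * (M (latticeNorm z) - ξ z) := mul_le_mul hst1 h3 h4 one_pos.le
          _ = _ := one_mul _
      have h6 : latticeNorm z / t * Real.log (M (latticeNorm z))
          ≤ latticeNorm z / t * Real.log (max (M (latticeNorm z)) 1) :=
        mul_le_mul_of_nonneg_left h2 (by positivity)
      rw [mul_sub] at h5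
      linarith
    · -- t ≤ s
      rcases le_total (ξ z) 3 with hx3 | hx3
      · have hpos : 0 ≤ latticeNorm z / t * Real.log (max (ξ z) 1) :=
          mul_nonneg (by positivity) (logplus_nonneg _)
        linarith
      · have hx1 : (1:ℝ) ≤ ξ z := by linarith
        have hlx : max (ξ z) 1 = ξ z := max_eq_left hx1
        have hlog1 : 1 ≤ Real.log (ξ z) := by
          rw [Real.le_log_iff_exp_le (by linarith)]
          calc Real.exp 1 ≤ 2.7182818286 := Real.exp_one_lt_d9.le
            _ ≤ 3 := by norm_num
            _ ≤ ξ z := hx3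
        rw [hlx]
        rcases le_total (latticeNorm z / t) (ξ z) with hcase | hcase
        · have hsp : (0:ℝ) < latticeNorm z := lt_of_lt_of_le ht0 hst
          have hMs := hMub (latticeNorm z) hsp z le_rfl
          have h1 := hNub (latticeNorm z) hsp
          have hxpos : (0:ℝ) < ξ z := by linarith
          have hMpos : (0:ℝ) < M (latticeNorm z) := by linarith
          have h2 : Real.log (M (latticeNorm z)) - Real.log (ξ z)
              ≤ M (latticeNorm z) / ξ z - 1 := by
            rw [← Real.log_div (ne_of_gt hMpos) (ne_of_gt hxpos)]
            exact Real.log_le_sub_one_of_pos (by positivity)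
          have hdiv1 : 0 ≤ M (latticeNorm z) / ξ z - 1 :=
            sub_nonneg.mpr ((one_le_div hxpos).mpr hMs)
          have h3 : latticeNorm z / t * (M (latticeNorm z) / ξ z - 1)
              ≤ M (latticeNorm z) - ξ z := by
            calc latticeNorm z / t * (M (latticeNorm z) / ξ z - 1)
                ≤ ξ z * (M (latticeNorm z) / ξ z - 1) :=
                  mul_le_mul_of_nonneg_right hcase hdiv1
              _ = M (latticeNorm z) - ξ z := by field_simp
          have h4 : latticeNorm z / t * (Real.log (M (latticeNorm z)) - Real.log (ξ z))
              ≤ latticeNorm z / t * (M (latticeNorm z) / ξ z - 1) :=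
            mul_le_mul_of_nonneg_left h2 (by positivity)
          rw [mul_sub] at h4
          linarith
        · have h1 : latticeNorm z / t ≤ latticeNorm z / t * Real.log (ξ z) :=
            le_mul_of_one_le_right (by positivity) hlog1
          linarith
  constructor
  · -- membership
    obtain ⟨⟨r, hr, hNr⟩, _⟩ := hN t ht0
    obtain ⟨z, hzr, hzM⟩ := (hM r hr).1
    rcases le_or_gt 1 (M r) with h1 | h1
    · refine ⟨z, ?_⟩
      have hmax : max (ξ z) 1 = ξ z := max_eq_left (hzM ▸ h1)
      apply le_antisymm
      · rw [hNr, hmax, hzM]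
        have hlog0 : 0 ≤ Real.log (M r) := Real.log_nonneg h1
        have h2 : latticeNorm z / t * Real.log (M r) ≤ r / t * Real.log (M r) :=
          mul_le_mul_of_nonneg_right ((div_le_div_iff_of_pos_right ht0).mpr hzr) hlog0
        linarith
      · exact hA z
    · exfalso
      have hrr₀ : r < r₀ := by
        by_contra h
        push_neg at h
        have := hMmono r₀ r hr₀0 h
        linarith
      have hBb := hBbound r hr hrr₀
      have hle2 : N t ≤ 2 := by
        rw [hNr]
        have h2 : -(r / t * Real.log (M r)) ≤ r / t * |Real.log (M r)| := by
          calc -(r / t * Real.log (M r)) = r / t * (-Real.log (M r)) := by ring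
            _ ≤ r / t * |Real.log (M r)| :=
              mul_le_mul_of_nonneg_left (neg_le_abs _) (by positivity)
        have h3 : r / t * |Real.log (M r)| ≤ 1 := by
          have h4 : r * |Real.log (M r)| ≤ r₀ * B :=
            mul_le_mul hrr₀.le hBb (abs_nonneg _) hr₀0.le
          rw [div_mul_eq_mul_div, div_le_one ht0]
          nlinarith
        linarith
      linarith
  · rintro v ⟨z, rfl⟩
    exact hA z
end

section
/- Fix $d\ge1$ and $\alpha>d$, and fix $\eta\in\mathbb{R}$. Let $\hat r_t$ maximize $f_t(r)=r^{d/\alpha}(\log r)^{1/\alpha}(\log\log r)^{1/\alpha}(\log\log\log r)^{1/\alpha+\eta}-\frac{r}{t}\log\frac{r}{2det}$ over $r>0$. Then as $t\to\infty$, $\log f_t(\hat r_t)=\frac{d}{\alpha-d}\log t-\frac{d-1}{\alpha-d}\log\log t+\frac{1}{\alpha-d}(\log\log\log t)(1+o(1))$, independently of $\eta$. -/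
/-!
Write `r = exp s`, `L = log t`, `a = d/α`, `q = 1/α`, `e = q + η` and `c = 2 d exp 1`. For
`s > exp 1` the main term is `exp Φ(s)` with `Φ(s) = a s + q log s + q log log s + e log log log s`,
and the penalty is `exp P(s)` with `P(s) = s - L + log (s - L - log c)`. Along
`s_κ(L) = (L - (1 - q) log L) / (1 - a) + κ log log L` both exponents equal
`E(L) + k log log L + o(log log L)`, where `E(L)` collects the two leading terms and `k` is
`a κ + q` for `Φ` and `κ` for `P`; they balance at `κ = q / (1 - a)`.

For `κ` below the balance point the main term wins at `r = exp s_κ`, which bounds the maximum from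
below. For `κ` above it, `Φ` grows with slope `< 1` beyond `s_κ` while `P` grows with slope `≥ 1`,
so the objective is negative for `r > exp s_κ`, and it is at most a constant times `exp Φ(s_κ)`
for smaller `r`. Nothing is computed for `r ≤ exp (exp 1)`, where the conventions for `log` and
`rpow` at arguments `≤ 1` come into play: there the main term is bounded by comparison with the
maximum at a single time `t₀`. The same comparison forces `e ≥ 0`, since for `e < 0` the factor
`(log log log r)^e` is unbounded as `log log r ↓ 1`.
-/

open Filter Real Set Topology

noncomputable section

namespace ParetoVariational

def mainTerm (a q e r : ℝ) : ℝ :=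
  r ^ a * log r ^ q * log (log r) ^ q * log (log (log r)) ^ e

def penalty (c t r : ℝ) : ℝ := r / t * log (r / (c * t))

def objective (a q e c t r : ℝ) : ℝ := mainTerm a q e r - penalty c t r

def mainExponent (a q e s : ℝ) : ℝ :=
  a * s + q * log s + q * log (log s) + e * log (log (log s))

def penaltyExponent (c L s : ℝ) : ℝ := s - L + log (s - L - log c)

def leadingExponent (a q L : ℝ) : ℝ := (a * L + (q - a) * log L) / (1 - a)

def trialLogRadius (a q κ L : ℝ) : ℝ := (L - (1 - q) * log L) / (1 - a) + κ * log (log L)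

lemma log_sub_log_le_div {x y : ℝ} (hx : 0 < x) (hy : 0 < y) : log x - log y ≤ (x - y) / y := by
  have h := log_le_sub_one_of_pos (div_pos hx hy)
  rw [log_div hx.ne' hy.ne'] at h
  rwa [sub_div, div_self hy.ne']

lemma log_sub_log_le_sub {x y : ℝ} (hy : 1 ≤ y) (hyx : y ≤ x) : log x - log y ≤ x - y :=
  (log_sub_log_le_div (by linarith) (by linarith)).trans (div_le_self (sub_nonneg.2 hyx) hy)

section Objective

variable {a q e c t r s : ℝ}

lemma neg_le_penalty (hc : 0 < c) (ht : 0 < t) (hr : 0 < r) : -c ≤ penalty c t r := by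
  have hu : 0 < r / (c * t) := by positivity
  have hulog : -1 ≤ r / (c * t) * log (r / (c * t)) := by
    have h := mul_le_mul_of_nonneg_left (one_sub_inv_le_log_of_pos hu) hu.le
    rw [mul_sub, mul_one, mul_inv_cancel₀ hu.ne'] at h
    linarith
  have hpen : penalty c t r = c * (r / (c * t) * log (r / (c * t))) := by
    unfold penalty; field_simp
  rw [hpen]
  nlinarith

lemma penalty_le_sq (hc : 0 < c) (ht : 0 < t) (hr : 0 ≤ r) : penalty c t r ≤ r ^ 2 / (c * t ^ 2) :=
  calc r / t * log (r / (c * t)) ≤ r / t * (r / (c * t)) :=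
        mul_le_mul_of_nonneg_left (log_le_self (by positivity)) (by positivity)
    _ = r ^ 2 / (c * t ^ 2) := by field_simp

lemma mainTerm_exp (hs : exp 1 < s) : mainTerm a q e (exp s) = exp (mainExponent a q e s) := by
  have hs0 : 0 < s := (exp_pos 1).trans hs
  have hls : 1 < log s := by rwa [lt_log_iff_exp_lt hs0]
  have hlls : 0 < log (log s) := log_pos hls
  rw [mainTerm, log_exp, ← exp_mul, rpow_def_of_pos hs0, rpow_def_of_pos (by linarith),
    rpow_def_of_pos hlls, ← exp_add, ← exp_add, ← exp_add, mainExponent]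
  ring_nf

lemma penalty_exp (hc : 0 < c) (ht : 0 < t) (hs : 0 < s - log t - log c) :
    penalty c t (exp s) = exp (penaltyExponent c (log t) s) := by
  have h1 : exp s / t = exp (s - log t) := by rw [exp_sub, exp_log ht]
  have h2 : log (exp s / (c * t)) = s - log t - log c := by
    rw [log_div (exp_ne_zero s) (by positivity), log_exp, log_mul hc.ne' ht.ne']; ring
  rw [penalty, h1, h2, penaltyExponent, exp_add, exp_log hs]

lemma mainExponent_mono (ha : 0 ≤ a) (hq : 0 ≤ q) (he : 0 ≤ e) {s' : ℝ} (hs : exp 1 < s)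
    (hss : s ≤ s') : mainExponent a q e s ≤ mainExponent a q e s' := by
  have hs0 : 0 < s := (exp_pos 1).trans hs
  have hls : 1 < log s := by rwa [lt_log_iff_exp_lt hs0]
  have h1 : log s ≤ log s' := log_le_log hs0 hss
  have h2 : log (log s) ≤ log (log s') := log_le_log (by linarith) h1
  have h3 : log (log (log s)) ≤ log (log (log s')) := log_le_log (log_pos hls) h2
  unfold mainExponent
  gcongr

lemma mainExponent_nonneg (ha : 0 ≤ a) (hq : 0 ≤ q) (he : 0 ≤ e)
    (hs : exp (exp 1) ≤ s) : 0 ≤ mainExponent a q e s := by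
  have hs0 : 0 < s := (exp_pos _).trans_le hs
  have hls : exp 1 ≤ log s := (le_log_iff_exp_le hs0).2 hs
  have h1 : 0 ≤ log s := (exp_pos 1).le.trans hls
  have h2 : 1 ≤ log (log s) := (le_log_iff_exp_le ((exp_pos 1).trans_le hls)).2 hls
  have h3 : 0 ≤ log (log (log s)) := log_nonneg h2
  unfold mainExponent
  have := mul_nonneg ha hs0.le
  have := mul_nonneg hq h1
  have := mul_nonneg hq (zero_le_one.trans h2)
  have := mul_nonneg he h3
  linarith

lemma mainExponent_sub_le (hq : 0 ≤ q) (he : 0 ≤ e) {x y : ℝ} (hy : exp (exp 1) ≤ y)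
    (hyx : y ≤ x) :
    mainExponent a q e x - mainExponent a q e y ≤ (a + (2 * q + e) / y) * (x - y) := by
  have hy0 : 0 < y := (exp_pos _).trans_le hy
  have hly : exp 1 ≤ log y := (le_log_iff_exp_le hy0).2 hy
  have hlly : 1 ≤ log (log y) := (le_log_iff_exp_le ((exp_pos 1).trans_le hly)).2 hly
  have hly1 : 1 ≤ log y := (one_le_exp zero_le_one).trans hly
  have h1 : log x - log y ≤ (x - y) / y := log_sub_log_le_div (by linarith) hy0
  have hlx : log y ≤ log x := log_le_log hy0 hyx
  have h2 : log (log x) - log (log y) ≤ (x - y) / y :=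
    (log_sub_log_le_sub hly1 hlx).trans h1
  have h3 : log (log (log x)) - log (log (log y)) ≤ (x - y) / y :=
    (log_sub_log_le_sub hlly (log_le_log (by linarith) hlx)).trans h2
  calc mainExponent a q e x - mainExponent a q e y
      = a * (x - y) + q * (log x - log y) + q * (log (log x) - log (log y))
        + e * (log (log (log x)) - log (log (log y))) := by unfold mainExponent; ring
    _ ≤ a * (x - y) + q * ((x - y) / y) + q * ((x - y) / y) + e * ((x - y) / y) := by gcongr
    _ = (a + (2 * q + e) / y) * (x - y) := by ring

lemma mainExponent_le_penaltyExponent (ha : a < 1) (hq : 0 ≤ q) (he : 0 ≤ e) {L s₀ : ℝ}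
    (hs₀ : exp (exp 1) ≤ s₀) (hslope : (2 * q + e) / (1 - a) ≤ s₀) (hpos : 0 < s₀ - L - log c)
    (hbal : mainExponent a q e s₀ ≤ penaltyExponent c L s₀) (hs : s₀ ≤ s) :
    mainExponent a q e s ≤ penaltyExponent c L s := by
  have hs₀0 : 0 < s₀ := (exp_pos _).trans_le hs₀
  have hslope' : (2 * q + e) / s₀ ≤ 1 - a := by
    rw [div_le_iff₀ hs₀0]; rw [div_le_iff₀ (by linarith)] at hslope; linarith
  have hΦ : mainExponent a q e s - mainExponent a q e s₀ ≤ s - s₀ :=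
    (mainExponent_sub_le hq he hs₀ hs).trans
      (mul_le_of_le_one_left (sub_nonneg.2 hs) (by linarith))
  have hlog : log (s₀ - L - log c) ≤ log (s - L - log c) := log_le_log hpos (by linarith)
  unfold penaltyExponent at *
  linarith

lemma mainTerm_le_add_exp (ha : 0 ≤ a) (hq : 0 ≤ q) (he : 0 ≤ e) {C : ℝ} (hC0 : 0 ≤ C)
    (hC : ∀ r ∈ Ioc 0 (exp (exp 1)), mainTerm a q e r ≤ C) (hr : 0 < r) (hrs : r ≤ exp s) :
    mainTerm a q e r ≤ C + exp (mainExponent a q e s) := by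
  rcases le_or_gt r (exp (exp 1)) with hsmall | hlarge
  · linarith [hC r ⟨hr, hsmall⟩, exp_pos (mainExponent a q e s)]
  · have hlog : exp 1 < log r := (lt_log_iff_exp_lt hr).2 hlarge
    have hmono := mainExponent_mono ha hq he hlog ((log_le_iff_le_exp hr).2 hrs)
    rw [← exp_log hr, mainTerm_exp hlog]
    linarith [exp_le_exp.2 hmono]

lemma mainTerm_le_of_objective_le {M : ℝ} (hc : 0 < c) (ht : 0 < t)
    (hM : ∀ r > 0, objective a q e c t r ≤ M) (hr : 0 < r) :
    mainTerm a q e r ≤ M + r ^ 2 / (c * t ^ 2) := by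
  have h := hM r hr
  have hpen := penalty_le_sq hc ht hr.le
  unfold objective at h
  linarith

lemma exists_lt_mainTerm (ha : 0 ≤ a) (hq : 0 ≤ q) (he : e < 0) (C : ℝ) :
    ∃ r ∈ Ioc 0 (exp (exp (exp 1))), C < mainTerm a q e r := by
  set u := exp ((|C| + 1) / e)
  have hu1 : u ≤ 1 := exp_le_one_iff.2 (div_nonpos_of_nonneg_of_nonpos (by positivity) he.le)
  refine ⟨exp (exp (exp u)), ⟨exp_pos _, by gcongr⟩, ?_⟩
  have hue : u ^ e = exp (|C| + 1) := by rw [← exp_mul, div_mul_cancel₀ _ he.ne]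
  have hfactor : 1 ≤ exp (exp (exp u)) ^ a * exp (exp u) ^ q * exp u ^ q :=
    one_le_mul_of_one_le_of_one_le (one_le_mul_of_one_le_of_one_le
      (one_le_rpow (one_le_exp (by positivity)) ha) (one_le_rpow (one_le_exp (by positivity)) hq))
      (one_le_rpow (one_le_exp (by positivity)) hq)
  rw [mainTerm, log_exp, log_exp, log_exp, hue]
  calc C < |C| + 1 := by linarith [le_abs_self C]
    _ < exp (|C| + 1) := by linarith [add_one_lt_exp (by positivity : |C| + 1 ≠ 0)]
    _ ≤ _ := le_mul_of_one_le_left (exp_pos _).le hfactor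

lemma exponent_nonneg_of_objective_le {M : ℝ} (ha : 0 ≤ a) (hq : 0 ≤ q) (hc : 0 < c) (ht : 0 < t)
    (hM : ∀ r > 0, objective a q e c t r ≤ M) : 0 ≤ e := by
  by_contra! he
  set R := exp (exp (exp 1))
  obtain ⟨r, ⟨hr, hrR⟩, hlt⟩ := exists_lt_mainTerm ha hq he (M + R ^ 2 / (c * t ^ 2))
  have hbound := mainTerm_le_of_objective_le hc ht hM hr
  have hrR' : r ^ 2 / (c * t ^ 2) ≤ R ^ 2 / (c * t ^ 2) := by gcongr
  linarith

end Objective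

section Asymptotics

lemma tendsto_log_sub_log {ι : Type*} {l : Filter ι} {u v : ι → ℝ} {k : ℝ} (hk : 0 < k)
    (hv : ∀ᶠ i in l, 0 < v i) (h : Tendsto (fun i => u i / v i) l (𝓝 k)) :
    Tendsto (fun i => log (u i) - log (v i)) l (𝓝 (log k)) := by
  refine ((continuousAt_log hk.ne').tendsto.comp h).congr' ?_
  filter_upwards [h.eventually (lt_mem_nhds hk), hv] with i hdiv hvi
  have hui : 0 < u i := by simpa [hvi.ne'] using mul_pos hdiv hvi
  exact log_div hui.ne' hvi.ne'

lemma tendsto_log_sub_log_of_tendsto_sub {ι : Type*} {l : Filter ι} {u v : ι → ℝ} {k : ℝ}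
    (h : Tendsto (fun i => u i - v i) l (𝓝 k)) (hv : Tendsto v l atTop) :
    Tendsto (fun i => log (u i) - log (v i)) l (𝓝 0) := by
  have hdiv : Tendsto (fun i => u i / v i) l (𝓝 1) := by
    have h1 := (h.div_atTop hv).const_add 1
    rw [add_zero] at h1
    refine h1.congr' ?_
    filter_upwards [hv.eventually_gt_atTop 0] with i hi
    field_simp
    ring
  simpa using tendsto_log_sub_log one_pos (hv.eventually_gt_atTop 0) hdiv

lemma tendsto_log_div_self_atTop : Tendsto (fun x => log x / x) atTop (𝓝 0) :=
  isLittleO_log_id_atTop.tendsto_div_nhds_zero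

variable {a q κ : ℝ}

lemma tendsto_trialLogRadius_div :
    Tendsto (fun L => trialLogRadius a q κ L / L) atTop (𝓝 (1 / (1 - a))) := by
  have hlog : Tendsto (fun L => log L / L) atTop (𝓝 0) := tendsto_log_div_self_atTop
  have hloglog : Tendsto (fun L => log (log L) / L) atTop (𝓝 0) :=
    ((isLittleO_log_id_atTop.comp_tendsto tendsto_log_atTop).trans
      isLittleO_log_id_atTop).tendsto_div_nhds_zero
  have h := (((tendsto_const_nhds (x := (1 : ℝ))).sub (hlog.const_mul (1 - q))).div_const
    (1 - a)).add (hloglog.const_mul κ)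
  simp only [mul_zero, sub_zero, add_zero] at h
  refine h.congr' ?_
  filter_upwards [eventually_gt_atTop 0] with L hL
  unfold trialLogRadius
  field_simp

lemma tendsto_trialLogRadius_sub_div (ha : a ≠ 1) (k : ℝ) :
    Tendsto (fun L => (trialLogRadius a q κ L - L - k) / L) atTop (𝓝 (a / (1 - a))) := by
  have h := ((tendsto_trialLogRadius_div (a := a) (q := q) (κ := κ)).sub_const 1).sub
    (tendsto_id.const_div_atTop k)
  have hlim : 1 / (1 - a) - 1 - 0 = a / (1 - a) := by
    field_simp [sub_ne_zero.2 ha.symm]; ring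
  rw [hlim] at h
  refine h.congr' ?_
  filter_upwards [eventually_gt_atTop 0] with L hL
  simp only [id]
  field_simp

lemma tendsto_trialLogRadius_atTop (ha : a < 1) : Tendsto (trialLogRadius a q κ) atTop atTop :=
  Tendsto.num tendsto_id (one_div_pos.2 (sub_pos.2 ha)) tendsto_trialLogRadius_div

lemma tendsto_trialLogRadius_sub_atTop (ha0 : 0 < a) (ha1 : a < 1) (k : ℝ) :
    Tendsto (fun L => trialLogRadius a q κ L - L - k) atTop atTop :=
  Tendsto.num tendsto_id (div_pos ha0 (sub_pos.2 ha1)) (tendsto_trialLogRadius_sub_div ha1.ne k)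

lemma tendsto_mainExponent_trialLogRadius (ha : a < 1) (e : ℝ) :
    Tendsto (fun L => (mainExponent a q e (trialLogRadius a q κ L) - leadingExponent a q L) /
      log (log L)) atTop (𝓝 (a * κ + q)) := by
  have hL := tendsto_log_atTop
  have hLL : Tendsto (fun L => log (log L)) atTop atTop := hL.comp hL
  have h1 : Tendsto (fun L => log (trialLogRadius a q κ L) - log L) atTop
      (𝓝 (log (1 / (1 - a)))) :=
    tendsto_log_sub_log (one_div_pos.2 (sub_pos.2 ha)) (eventually_gt_atTop 0)
      tendsto_trialLogRadius_div
  have h2 := tendsto_log_sub_log_of_tendsto_sub h1 hL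
  have h3 := tendsto_log_sub_log_of_tendsto_sub h2 hLL
  have h := ((((h1.div_atTop hLL).const_mul q).add ((h2.div_atTop hLL).const_mul q)).add
    (((h3.div_atTop hLL).add (tendsto_log_div_self_atTop.comp hLL)).const_mul e)).const_add
    (a * κ + q)
  simp only [mul_zero, add_zero] at h
  refine h.congr' ?_
  filter_upwards [hLL.eventually_gt_atTop 0] with L hL0
  simp only [Function.comp, mainExponent, leadingExponent, trialLogRadius]
  field_simp [(sub_pos.2 ha).ne']
  ring

lemma tendsto_penaltyExponent_trialLogRadius (ha0 : 0 < a) (ha1 : a < 1) (c : ℝ) :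
    Tendsto (fun L => (penaltyExponent c L (trialLogRadius a q κ L) - leadingExponent a q L) /
      log (log L)) atTop (𝓝 κ) := by
  have hLL : Tendsto (fun L => log (log L)) atTop atTop := tendsto_log_atTop.comp tendsto_log_atTop
  have h1 := tendsto_log_sub_log (div_pos ha0 (sub_pos.2 ha1)) (eventually_gt_atTop 0)
    (tendsto_trialLogRadius_sub_div (q := q) (κ := κ) ha1.ne (log c))
  have h := (h1.div_atTop hLL).const_add κ
  rw [add_zero] at h
  refine h.congr' ?_
  filter_upwards [hLL.eventually_gt_atTop 0] with L hL0
  simp only [penaltyExponent, leadingExponent, trialLogRadius]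
  field_simp [(sub_pos.2 ha1).ne']
  ring

lemma tendsto_mainExponent_sub_penaltyExponent (ha0 : 0 < a) (ha1 : a < 1) (e c : ℝ) :
    Tendsto (fun L => (mainExponent a q e (trialLogRadius a q κ L) -
      penaltyExponent c L (trialLogRadius a q κ L)) / log (log L)) atTop
      (𝓝 (a * κ + q - κ)) :=
  ((tendsto_mainExponent_trialLogRadius ha1 e).sub
    (tendsto_penaltyExponent_trialLogRadius ha0 ha1 c)).congr' (.of_forall fun L => by ring)

end Asymptotics

section Maximum

def IsEventualMaximizer (F : ℝ → ℝ → ℝ) (rhat : ℝ → ℝ) : Prop :=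
  ∀ᶠ t in atTop, 0 < rhat t ∧ ∀ r > 0, F t r ≤ F t (rhat t)

variable {a q e c κ : ℝ} {rhat : ℝ → ℝ}

lemma eventually_exp_penaltyExponent_le_objective (ha0 : 0 < a) (ha1 : a < 1) (hc : 0 < c)
    (hκ : κ < a * κ + q) :
    ∀ᶠ t in atTop, exp (penaltyExponent c (log t) (trialLogRadius a q κ (log t))) ≤
      objective a q e c t (exp (trialLogRadius a q κ (log t))) := by
  have hgap : Tendsto (fun L => mainExponent a q e (trialLogRadius a q κ L) -
      penaltyExponent c L (trialLogRadius a q κ L)) atTop atTop :=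
    Tendsto.num (tendsto_log_atTop.comp tendsto_log_atTop) (by linarith)
      (tendsto_mainExponent_sub_penaltyExponent ha0 ha1 e c)
  have hsTop := tendsto_trialLogRadius_atTop (q := q) (κ := κ) ha1
  have huTop := tendsto_trialLogRadius_sub_atTop (q := q) (κ := κ) ha0 ha1 (log c)
  have hL := (hsTop.eventually_gt_atTop (exp 1)).and
    ((huTop.eventually_gt_atTop 0).and (hgap.eventually_ge_atTop (log 2)))
  filter_upwards [tendsto_log_atTop.eventually hL, eventually_gt_atTop 0]
    with t ⟨hs, hu, hdom⟩ ht
  rw [objective, mainTerm_exp hs, penalty_exp hc ht hu]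
  have h2 : exp (penaltyExponent c (log t) (trialLogRadius a q κ (log t))) * 2 ≤
      exp (mainExponent a q e (trialLogRadius a q κ (log t))) := by
    rw [← exp_log two_pos, ← exp_add]
    exact exp_le_exp.2 (by linarith)
  linarith

lemma eventually_objective_le (ha0 : 0 < a) (ha1 : a < 1) (hq : 0 ≤ q) (he : 0 ≤ e) (hc : 0 < c)
    {C : ℝ} (hC0 : 0 ≤ C) (hC : ∀ r ∈ Ioc 0 (exp (exp 1)), mainTerm a q e r ≤ C)
    (hκ : a * κ + q < κ) :
    ∀ᶠ t in atTop, ∀ r > 0, objective a q e c t r ≤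
      (C + c + 1) * exp (mainExponent a q e (trialLogRadius a q κ (log t))) := by
  have hbal : ∀ᶠ L in atTop, mainExponent a q e (trialLogRadius a q κ L) ≤
      penaltyExponent c L (trialLogRadius a q κ L) := by
    filter_upwards [(tendsto_mainExponent_sub_penaltyExponent ha0 ha1 e c).eventually
        (gt_mem_nhds (sub_neg.2 hκ)),
      (tendsto_log_atTop.comp tendsto_log_atTop).eventually_gt_atTop 0]
      with L hneg (hℓ : 0 < log (log L))
    rw [div_lt_iff₀ hℓ, zero_mul] at hneg
    linarith
  have hsTop := tendsto_trialLogRadius_atTop (q := q) (κ := κ) ha1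
  have huTop := tendsto_trialLogRadius_sub_atTop (q := q) (κ := κ) ha0 ha1 (log c)
  have hL := (hsTop.eventually_ge_atTop (exp (exp 1))).and
    ((hsTop.eventually_ge_atTop ((2 * q + e) / (1 - a))).and
      ((huTop.eventually_gt_atTop 0).and hbal))
  filter_upwards [tendsto_log_atTop.eventually hL, eventually_gt_atTop 0]
    with t ⟨hs₀, hslope, hu, hbal⟩ ht r hr
  set s₀ := trialLogRadius a q κ (log t)
  have hpen := neg_le_penalty hc ht hr
  have hexp : 1 ≤ exp (mainExponent a q e s₀) := one_le_exp (mainExponent_nonneg ha0.le hq he hs₀)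
  rcases le_or_gt r (exp s₀) with hle | hgt
  · have hmain := mainTerm_le_add_exp ha0.le hq he hC0 hC hr hle
    unfold objective
    nlinarith
  · have hlog : s₀ < log r := (lt_log_iff_exp_lt hr).2 hgt
    have hdom := mainExponent_le_penaltyExponent ha1 hq he hs₀ hslope hu hbal hlog.le
    have hlogr : exp 1 < log r := by linarith [add_one_lt_exp (exp_pos 1).ne']
    rw [objective, ← exp_log hr, mainTerm_exp hlogr, penalty_exp hc ht (by linarith)]
    nlinarith [exp_le_exp.2 hdom]

lemma eventually_lt_log_objective_div (ha0 : 0 < a) (ha1 : a < 1) (hc : 0 < c)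
    (hmax : IsEventualMaximizer (objective a q e c) rhat)
    {b : ℝ} (hb : b < q / (1 - a)) :
    ∀ᶠ t in atTop, 0 < objective a q e c t (rhat t) ∧
      b < (log (objective a q e c t (rhat t)) - leadingExponent a q (log t)) /
        log (log (log t)) := by
  obtain ⟨κ, hbκ, hκδ⟩ := exists_between hb
  have hκ : κ < a * κ + q := by
    rw [lt_div_iff₀ (sub_pos.2 ha1)] at hκδ
    linarith
  have hP := (tendsto_penaltyExponent_trialLogRadius (q := q) (κ := κ) ha0 ha1 c).comp
    tendsto_log_atTop
  filter_upwards [eventually_exp_penaltyExponent_le_objective (e := e) ha0 ha1 hc hκ,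
    hP.eventually (lt_mem_nhds hbκ), hmax,
    (tendsto_log_atTop.comp (tendsto_log_atTop.comp tendsto_log_atTop)).eventually_gt_atTop 0]
    with t hlow hbt ⟨_, hM⟩ hℓ
  have hM' := hlow.trans (hM _ (exp_pos _))
  refine ⟨(exp_pos _).trans_le hM', hbt.trans_le ?_⟩
  have hlog := (le_log_iff_exp_le ((exp_pos _).trans_le hM')).2 hM'
  exact div_le_div_of_nonneg_right (by linarith) hℓ.le

lemma eventually_log_objective_div_lt (ha0 : 0 < a) (ha1 : a < 1) (hq : 0 ≤ q) (he : 0 ≤ e)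
    (hc : 0 < c) {C : ℝ} (hC0 : 0 ≤ C) (hC : ∀ r ∈ Ioc 0 (exp (exp 1)), mainTerm a q e r ≤ C)
    (hmax : IsEventualMaximizer (objective a q e c) rhat)
    {b : ℝ} (hb : q / (1 - a) < b) :
    ∀ᶠ t in atTop, (log (objective a q e c t (rhat t)) - leadingExponent a q (log t)) /
        log (log (log t)) < b := by
  have hκ : a * b + q < b := by
    rw [div_lt_iff₀ (sub_pos.2 ha1)] at hb
    linarith
  have hℓ := tendsto_log_atTop.comp (tendsto_log_atTop.comp tendsto_log_atTop)
  have hΦ := (((tendsto_mainExponent_trialLogRadius (q := q) (κ := b) ha1 e).comp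
    tendsto_log_atTop).add (hℓ.const_div_atTop (log (C + c + 1))))
  rw [add_zero] at hΦ
  filter_upwards [eventually_objective_le ha0 ha1 hq he hc hC0 hC hκ, hmax,
    eventually_lt_log_objective_div ha0 ha1 hc hmax (b := q / (1 - a) - 1) (by linarith),
    hΦ.eventually (gt_mem_nhds hκ), hℓ.eventually_gt_atTop 0] with t hup ⟨hr, _⟩ ⟨hM, _⟩ hlt hℓt
  refine lt_of_le_of_lt ?_ hlt
  have hlog := log_le_log hM (hup _ hr)
  rw [log_mul (by positivity) (exp_pos _).ne', log_exp] at hlog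
  simp only [Function.comp]
  rw [← add_div]
  exact div_le_div_of_nonneg_right (by linarith) hℓt.le

theorem tendsto_log_objective_maximizer (ha0 : 0 < a) (ha1 : a < 1) (hq : 0 ≤ q) (hc : 0 < c)
    (hmax : IsEventualMaximizer (objective a q e c) rhat) :
    Tendsto (fun t => (log (objective a q e c t (rhat t)) - leadingExponent a q (log t)) /
      log (log (log t))) atTop (𝓝 (q / (1 - a))) := by
  obtain ⟨t₀, ⟨-, hM₀⟩, ht₀⟩ := (hmax.and (eventually_gt_atTop 0)).exists
  have he := exponent_nonneg_of_objective_le ha0.le hq hc ht₀ hM₀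
  have hC : ∀ r ∈ Ioc 0 (exp (exp 1)), mainTerm a q e r ≤
      max 0 (objective a q e c t₀ (rhat t₀) + exp (exp 1) ^ 2 / (c * t₀ ^ 2)) := fun r hr =>
    (mainTerm_le_of_objective_le hc ht₀ hM₀ hr.1).trans
      (le_max_of_le_right (by gcongr; exact hr.1.le; exact hr.2))
  exact tendsto_order.2
    ⟨fun b hb => (eventually_lt_log_objective_div ha0 ha1 hc hmax hb).mono fun _ h => h.2,
      fun b hb => eventually_log_objective_div_lt ha0 ha1 hq he hc (le_max_left _ _) hC hmax hb⟩

end Maximum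

end ParetoVariational

end

theorem pareto_limsup_variational_asymptotics
    (d : ℕ) (hd : 1 ≤ d) (α η : ℝ) (hα : (d : ℝ) < α)
    (f : ℝ → ℝ → ℝ)
    (hf : ∀ t r : ℝ, f t r = r ^ ((d : ℝ) / α) * (Real.log r) ^ (1 / α) *
          (Real.log (Real.log r)) ^ (1 / α) *
          (Real.log (Real.log (Real.log r))) ^ (1 / α + η)
        - r / t * Real.log (r / (2 * d * Real.exp 1 * t)))
    (rhat : ℝ → ℝ)
    (hmax : ∀ᶠ t : ℝ in atTop, 0 < rhat t ∧ ∀ r > 0, f t r ≤ f t (rhat t)) :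
    Tendsto (fun t => (Real.log (f t (rhat t)) - (d : ℝ) / (α - d) * Real.log t
          + ((d : ℝ) - 1) / (α - d) * Real.log (Real.log t)) /
        Real.log (Real.log (Real.log t))) atTop (nhds (1 / (α - d))) := by
  have hd' : (1 : ℝ) ≤ d := by exact_mod_cast hd
  have hα0 : 0 < α := by linarith
  have hF : f = ParetoVariational.objective (d / α) (1 / α) (1 / α + η) (2 * d * exp 1) :=
    funext fun t => funext fun r => hf t r
  subst hF
  have key := ParetoVariational.tendsto_log_objective_maximizer (by positivity)
    ((div_lt_one hα0).2 hα) (by positivity) (by positivity) hmax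
  have hlim : 1 / α / (1 - d / α) = 1 / (α - d) := by field_simp
  have hlead : ∀ L, ParetoVariational.leadingExponent (d / α) (1 / α) L =
      d / (α - d) * L - (d - 1) / (α - d) * log L := by
    intro L
    unfold ParetoVariational.leadingExponent
    field_simp
    ring
  rw [hlim] at key
  refine key.congr fun t => ?_
  rw [hlead]
  ring
end

section
/- Let $\{\hat\xi(z):z\in\mathbb{Z}^d\}$ be i.i.d. standard exponential random variables, let $\ell_n=\kappa_d(n)n^d$ be the number of lattice points in the $\ell^1$-ball of radius $n$, and let $\hat M_n^{(k)}$ denote the $(k+1)$st largest value among $\{\hat\xi(z):|z|\le n\}$. Then for every $\rho\in(0,d)$, almost surely, $\lim_{n\to\infty}\hat M_n^{(\lfloor n^\rho\rfloor)}/\log n = d-\rho$. -/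
open MeasureTheory ProbabilityTheory Filter
open scoped Classical

/-- The ℓ¹-ball of radius `n` in `ℤᵈ`, as a finite set. -/
noncomputable def latticeBall (d n : ℕ) : Finset (Fin d → ℤ) :=
  (Finset.Icc (fun _ => -(n : ℤ)) (fun _ => (n : ℤ))).filter
    (fun z => ∑ j, (z j).natAbs ≤ n)

/-!
Write `m = #B_n ≍ n^d`, `k = ⌊n^ρ⌋` and `L = d - ρ`. If `M_n > (L + ε) log n`, at least `k + 1` of
the `m` values exceed `(L + ε) log n`; by independence and a union bound over `(k + 1)`-subsets this
has probability at most `C(m, k+1) n^{-(L+ε)(k+1)} ≤ (e m n^{-(L+ε)} / (k+1))^{k+1} ≤ n^{-2}`.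
If `M_n ≤ (L - ε) log n`, at least `m - k` values are at most `(L - ε) log n`, with probability at most
`C(m, k) (1 - n^{-(L-ε)})^{m-k} ≤ exp (k log m - (m - k) n^{-(L-ε)}) ≤ n^{-2}`, because
`m n^{-(L-ε)} ≍ n^{ρ+ε}` beats `k log m ≍ n^ρ log n`. By Borel–Cantelli, almost surely
`(L - ε) log n < M_n ≤ (L + ε) log n` for all large `n`, and `ε ↓ 0` along a sequence gives the limit.
-/

open Finset Real
open scoped ENNReal Nat Topology

theorem Nat.choose_mul_pow_le_pow {m j : ℕ} (hj : 0 < j) {q : ℝ} (hq : 0 ≤ q) :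
    (m.choose j : ℝ) * q ^ j ≤ (exp 1 * m * q / j) ^ j := by
  have hfact : ((j : ℝ) / exp 1) ^ j ≤ j ! := by
    have := Real.pow_div_factorial_le_exp j (Nat.cast_nonneg j) j
    rw [div_pow, exp_one_pow, div_le_iff₀ (exp_pos _)]
    rw [div_le_iff₀ (by positivity)] at this
    linarith
  calc (m.choose j : ℝ) * q ^ j ≤ m ^ j / j ! * q ^ j := by
        gcongr; exact Nat.choose_le_pow_div j m
    _ ≤ m ^ j / (j / exp 1) ^ j * q ^ j := by gcongr
    _ = (exp 1 * m * q / j) ^ j := by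
        have : (j : ℝ) ≠ 0 := by positivity
        rw [div_pow, div_pow, mul_pow, mul_pow]
        field_simp

theorem Nat.choose_sub_mul_one_sub_pow_le {m k : ℕ} (hkm : k ≤ m) {q : ℝ} (hq : q ≤ 1) :
    (m.choose (m - k) : ℝ) * (1 - q) ^ (m - k) ≤ m ^ k * exp (-((m - k : ℕ) * q)) := by
  rw [Nat.choose_symm hkm]
  have hpow : (1 - q) ^ (m - k) ≤ exp (-((m - k : ℕ) * q)) := by
    calc (1 - q) ^ (m - k) ≤ exp (-q) ^ (m - k) :=
          pow_le_pow_left₀ (by linarith) (by linarith [add_one_le_exp (-q)]) _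
      _ = exp (-((m - k : ℕ) * q)) := by rw [← exp_nat_mul]; ring_nf
  exact mul_le_mul (by exact_mod_cast Nat.choose_le_pow m k) hpow (by positivity) (by positivity)

theorem eventually_mul_log_add_le_mul_rpow (A B : ℝ) {c ε : ℝ} (hc : 0 < c) (hε : 0 < ε) :
    ∀ᶠ n : ℕ in atTop, A * log n + B ≤ c * (n : ℝ) ^ ε := by
  have ho : (fun x : ℝ => A * log x + B) =o[atTop] fun x => x ^ ε :=
    ((isLittleO_log_rpow_atTop hε).const_mul_left A).add
      (Asymptotics.isLittleO_const_left.2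
        (Or.inr (tendsto_abs_atTop_atTop.comp (tendsto_rpow_atTop hε))))
  have hreal : ∀ᶠ x : ℝ in atTop, A * log x + B ≤ c * x ^ ε := by
    filter_upwards [ho.def hc, eventually_ge_atTop 0] with x hx hx0
    rw [Real.norm_of_nonneg (rpow_nonneg hx0 _)] at hx
    exact (le_abs_self _).trans hx
  exact tendsto_natCast_atTop_atTop.eventually hreal

theorem exp_neg_mul_log {x : ℝ} (hx : 0 < x) (a : ℝ) : exp (-(a * log x)) = x ^ (-a) := by
  rw [rpow_def_of_pos hx]; ring_nf

theorem eventually_choose_mul_rpow_pow_le {m j : ℕ → ℕ} {C D ρ ε : ℝ} (hρ : 0 < ρ) (hε : 0 < ε)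
    (hm : ∀ᶠ n : ℕ in atTop, (m n : ℝ) ≤ C * (n : ℝ) ^ D) (hj : ∀ n : ℕ, (n : ℝ) ^ ρ ≤ j n) :
    ∀ᶠ n : ℕ in atTop,
      ((m n).choose (j n) : ℝ) * ((n : ℝ) ^ (-(D - ρ + ε))) ^ j n ≤ (n : ℝ) ^ (-2 : ℝ) := by
  filter_upwards [hm, eventually_gt_atTop 0,
    eventually_mul_log_add_le_mul_rpow 0 (exp 1 * C) one_pos (half_pos hε),
    ((tendsto_rpow_atTop hρ).comp tendsto_natCast_atTop_atTop).eventually_ge_atTop (4 / ε)]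
    with n hmn hn hC hρn
  simp only [zero_mul, zero_add, one_mul] at hC
  have hn0 : (0 : ℝ) < n := Nat.cast_pos.2 hn
  set q := (n : ℝ) ^ (-(D - ρ + ε))
  have hq : (n : ℝ) ^ D * q = (n : ℝ) ^ ρ * (n : ℝ) ^ (-ε) := by
    rw [← rpow_add hn0, ← rpow_add hn0]; ring_nf
  have hnρ : 0 < (n : ℝ) ^ ρ := rpow_pos_of_pos hn0 ρ
  have hj0 : (0 : ℝ) < j n := hnρ.trans_le (hj n)
  have hbase : exp 1 * m n * q / j n ≤ (n : ℝ) ^ (-(ε / 2)) := by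
    calc exp 1 * m n * q / j n ≤ exp 1 * (C * n ^ D) * q / n ^ ρ := by
          gcongr
          · exact mul_nonneg (mul_nonneg (exp_pos 1).le ((Nat.cast_nonneg _).trans hmn))
              (rpow_nonneg hn0.le _)
          · exact hj n
      _ = exp 1 * C * n ^ (-ε) := by
          rw [mul_assoc, mul_assoc C, hq]; field_simp
      _ ≤ n ^ (ε / 2) * n ^ (-ε) := by gcongr
      _ = n ^ (-(ε / 2)) := by rw [← rpow_add hn0]; ring_nf
  have hexp : 2 ≤ ε / 2 * j n := by
    have := (div_le_iff₀ hε).1 (hρn.trans (hj n))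
    linarith
  calc ((m n).choose (j n) : ℝ) * q ^ j n ≤ (exp 1 * m n * q / j n) ^ j n :=
        Nat.choose_mul_pow_le_pow (by exact_mod_cast hj0) (rpow_nonneg hn0.le _)
    _ ≤ ((n : ℝ) ^ (-(ε / 2))) ^ j n := by gcongr
    _ = (n : ℝ) ^ (-(ε / 2) * j n) := by rw [← rpow_natCast, ← rpow_mul hn0.le]
    _ ≤ (n : ℝ) ^ (-2 : ℝ) :=
        rpow_le_rpow_of_exponent_le (by exact_mod_cast hn) (by linarith)

theorem eventually_choose_sub_mul_one_sub_rpow_pow_le {m k : ℕ → ℕ} {c C D ρ ε : ℝ} (hc : 0 < c)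
    (hρ : 0 ≤ ρ) (hε : 0 < ε) (hρεD : ρ + ε ≤ D)
    (hm : ∀ᶠ n : ℕ in atTop, c * (n : ℝ) ^ D ≤ m n ∧ (m n : ℝ) ≤ C * (n : ℝ) ^ D)
    (hk : ∀ n : ℕ, (k n : ℝ) ≤ (n : ℝ) ^ ρ) :
    ∀ᶠ n : ℕ in atTop, ((m n).choose (m n - k n) : ℝ) *
      (1 - (n : ℝ) ^ (-(D - ρ - ε))) ^ (m n - k n) ≤ (n : ℝ) ^ (-2 : ℝ) := by
  filter_upwards [hm, eventually_gt_atTop 0,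
    eventually_mul_log_add_le_mul_rpow (D + 2) (log C + 1) hc hε,
    eventually_mul_log_add_le_mul_rpow 0 1 hc hε] with n ⟨hcm, hmC⟩ hn hlog hone
  simp only [zero_mul, zero_add] at hone
  have hn0 : (0 : ℝ) < n := Nat.cast_pos.2 hn
  have hn1 : (1 : ℝ) ≤ n := by exact_mod_cast hn
  set q := (n : ℝ) ^ (-(D - ρ - ε))
  have hq1 : q ≤ 1 := rpow_le_one_of_one_le_of_nonpos hn1 (by linarith)
  have hnρ : 1 ≤ (n : ℝ) ^ ρ := one_le_rpow hn1 hρ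
  have hmq : c * n ^ ρ * n ^ ε ≤ m n * q := by
    calc c * n ^ ρ * n ^ ε = c * n ^ D * q := by
          rw [mul_assoc, mul_assoc, ← rpow_add hn0, ← rpow_add hn0]; ring_nf
      _ ≤ m n * q := by gcongr
  have hkm : k n ≤ m n := by
    have : (k n : ℝ) ≤ m n :=
      calc (k n : ℝ) ≤ n ^ ρ := hk n
        _ ≤ c * n ^ ρ * n ^ ε := by nlinarith
        _ ≤ m n * q := hmq
        _ ≤ m n := mul_le_of_le_one_right (Nat.cast_nonneg _) hq1
    exact_mod_cast this
  have hm0 : (0 : ℝ) < m n := lt_of_lt_of_le (by positivity) hcm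
  have hCn : 0 < C * n ^ D := hm0.trans_le hmC
  have hlogm : log (m n) ≤ log C + D * log n := by
    rw [← log_rpow hn0, ← log_mul (left_ne_zero_of_mul hCn.ne') (by positivity)]
    exact log_le_log hm0 hmC
  have hklog : k n * log (m n) ≤ n ^ ρ * (log C + D * log n) :=
    mul_le_mul (hk n) hlogm (log_nonneg (by exact_mod_cast hm0)) (by positivity)
  have hkq : (k n : ℝ) * q ≤ n ^ ρ := (mul_le_of_le_one_right (Nat.cast_nonneg _) hq1).trans (hk n)
  have hgrowth := mul_le_mul_of_nonneg_left hlog (zero_le_one.trans hnρ)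
  have hlogρ : log n ≤ n ^ ρ * log n := le_mul_of_one_le_left (log_natCast_nonneg n) hnρ
  have hexpo : k n * log (m n) - (m n - k n : ℕ) * q ≤ -2 * log n := by
    rw [Nat.cast_sub hkm]
    linarith
  calc ((m n).choose (m n - k n) : ℝ) * (1 - q) ^ (m n - k n)
      ≤ m n ^ k n * exp (-((m n - k n : ℕ) * q)) := Nat.choose_sub_mul_one_sub_pow_le hkm hq1
    _ = exp (k n * log (m n) - (m n - k n : ℕ) * q) := by
        rw [sub_eq_add_neg, exp_add, mul_comm (k n : ℝ), ← rpow_def_of_pos hm0, rpow_natCast]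
    _ ≤ exp (-2 * log n) := exp_le_exp.2 hexpo
    _ = (n : ℝ) ^ (-2 : ℝ) := by rw [rpow_def_of_pos hn0, mul_comm]

theorem le_of_card_filter_lt_card_filter {ι : Type*} {S : Finset ι} {v : ι → ℝ} {M x : ℝ}
    (h : #{z ∈ S | x < v z} < #{z ∈ S | M ≤ v z}) : M ≤ x := by
  by_contra! hxM
  exact h.not_ge (card_le_card (monotone_filter_right _ fun z _ hz => hxM.trans_le hz))

theorem lt_of_card_filter_add_card_filter_le {ι : Type*} {S : Finset ι} {v : ι → ℝ} {z₀ : ι}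
    (hz₀ : z₀ ∈ S) {y : ℝ} (h : #{z ∈ S | v z ≤ y} + #{z ∈ S | v z₀ ≤ v z} ≤ #S) : y < v z₀ := by
  by_contra! hy
  have hsplit := card_filter_add_card_filter_not (s := S) (fun z => v z ≤ v z₀)
  have hle : #{z ∈ S | v z ≤ v z₀} ≤ #{z ∈ S | v z ≤ y} :=
    card_le_card (monotone_filter_right _ fun z _ hz => hz.trans hy)
  have hlt : #{z ∈ S | ¬ v z ≤ v z₀} < #{z ∈ S | v z₀ ≤ v z} :=
    card_lt_card ⟨monotone_filter_right _ fun z _ hz => (not_le.1 hz).le,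
      fun hsub => by simpa using hsub (mem_filter.2 ⟨hz₀, le_rfl⟩)⟩
  omega

theorem measure_le_card_filter_mem_le {ι β Ω : Type*} [MeasurableSpace β] [MeasurableSpace Ω]
    {μ : Measure Ω} {ξ : ι → Ω → β} (hξ : iIndepFun ξ μ) {B : Set β} (hB : MeasurableSet B)
    {p : ℝ≥0∞} {S : Finset ι} (hp : ∀ z ∈ S, μ (ξ z ⁻¹' B) = p) (j : ℕ) :
    μ {ω | j ≤ #{z ∈ S | ξ z ω ∈ B}} ≤ (#S).choose j * p ^ j := by
  calc μ {ω | j ≤ #{z ∈ S | ξ z ω ∈ B}}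
      ≤ μ (⋃ T ∈ S.powersetCard j, ⋂ z ∈ T, ξ z ⁻¹' B) := by
        refine measure_mono fun ω hω => ?_
        obtain ⟨T, hT, hTcard⟩ := exists_subset_card_eq hω
        simp only [Set.mem_iUnion, Set.mem_iInter, mem_powersetCard]
        exact ⟨T, ⟨hT.trans (filter_subset _ _), hTcard⟩, fun z hz => (mem_filter.1 (hT hz)).2⟩
    _ ≤ ∑ T ∈ S.powersetCard j, μ (⋂ z ∈ T, ξ z ⁻¹' B) := measure_biUnion_finset_le _ _
    _ = ∑ T ∈ S.powersetCard j, p ^ j := by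
        refine sum_congr rfl fun T hT => ?_
        rw [mem_powersetCard] at hT
        rw [hξ.meas_biInter fun z _ => ⟨B, hB, rfl⟩,
          prod_congr rfl fun z hz => hp z (hT.1 hz), prod_const, hT.2]
    _ = (#S).choose j * p ^ j := by rw [sum_const, card_powersetCard, nsmul_eq_mul]

theorem ae_eventually_notMem_of_summable {Ω : Type*} [MeasurableSpace Ω] {μ : Measure Ω}
    [IsFiniteMeasure μ] {s : ℕ → Set Ω} {f : ℕ → ℝ} (hf0 : ∀ n, 0 ≤ f n) (hf : Summable f)
    (hs : ∀ᶠ n in atTop, μ (s n) ≤ ENNReal.ofReal (f n)) :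
    ∀ᵐ ω ∂μ, ∀ᶠ n in atTop, ω ∉ s n := by
  have hsum : Summable fun n => μ.real (s n) :=
    hf.of_norm_bounded_eventually_nat (hs.mono fun n hn => by
      rw [Real.norm_of_nonneg measureReal_nonneg]
      exact ENNReal.toReal_le_of_le_ofReal (hf0 n) hn)
  refine ae_eventually_notMem ?_
  rw [tsum_congr fun n => (ofReal_measureReal (μ := μ) (s := s n)).symm,
    ← ENNReal.ofReal_tsum_of_nonneg (fun _ => measureReal_nonneg) hsum]
  exact ENNReal.ofReal_ne_top

theorem ae_tendsto_of_forall_ae_eventually_mem_Icc {Ω : Type*} [MeasurableSpace Ω]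
    {μ : Measure Ω} {f : ℕ → Ω → ℝ} {L δ : ℝ} (hδ : 0 < δ)
    (h : ∀ ε, 0 < ε → ε < δ → ∀ᵐ ω ∂μ, ∀ᶠ n in atTop, f n ω ∈ Set.Icc (L - ε) (L + ε)) :
    ∀ᵐ ω ∂μ, Tendsto (fun n => f n ω) atTop (𝓝 L) := by
  have hj : ∀ j : ℕ, ∀ᵐ ω ∂μ, ∀ᶠ n in atTop, f n ω ∈ Set.Icc (L - δ / (j + 2)) (L + δ / (j + 2)) :=
    fun j => h _ (by positivity) (div_lt_self hδ (by linarith [j.cast_nonneg (α := ℝ)]))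
  filter_upwards [ae_all_iff.2 hj] with ω hω
  refine Metric.tendsto_nhds.2 fun ε hε => ?_
  obtain ⟨j, hj⟩ := exists_nat_gt (δ / ε)
  have hjε : δ / (j + 2) < ε := by
    rw [div_lt_iff₀ hε] at hj
    rw [div_lt_iff₀ (by positivity)]
    nlinarith
  filter_upwards [hω j] with n hn
  rw [Real.dist_eq, abs_sub_lt_iff]
  constructor <;> linarith [hn.1, hn.2]

section Thresholds

variable {ι Ω : Type*} [MeasureSpace Ω] [IsProbabilityMeasure (ℙ : Measure Ω)]
  {ξ : ι → Ω → ℝ} {S : ℕ → Finset ι} {ρ ε D : ℝ}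

theorem ae_eventually_card_filter_lt_lt (hξ : iIndepFun ξ ℙ)
    (hdist : ∀ z, ∀ x : ℝ, 0 ≤ x → ℙ {ω | x < ξ z ω} = ENNReal.ofReal (exp (-x)))
    (hρ : 0 < ρ) (hε : 0 < ε) (hρD : ρ ≤ D) {C : ℝ}
    (hS : ∀ᶠ n : ℕ in atTop, (#(S n) : ℝ) ≤ C * (n : ℝ) ^ D) :
    ∀ᵐ ω, ∀ᶠ n : ℕ in atTop, #{z ∈ S n | (D - ρ + ε) * log n < ξ z ω} < ⌊(n : ℝ) ^ ρ⌋₊ + 1 := by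
  have hbound := eventually_choose_mul_rpow_pow_le hρ hε hS (j := fun n => ⌊(n : ℝ) ^ ρ⌋₊ + 1)
    fun n => by push_cast; exact (Nat.lt_floor_add_one _).le
  refine (ae_eventually_notMem_of_summable (fun n => rpow_nonneg n.cast_nonneg _)
    (summable_nat_rpow.2 (by norm_num : (-2 : ℝ) < -1)) ?_).mono
    fun ω hω => hω.mono fun n hn => not_le.1 hn
  filter_upwards [hbound, eventually_gt_atTop 0] with n hn hn0
  have hx : 0 ≤ (D - ρ + ε) * log n := mul_nonneg (by linarith) (log_natCast_nonneg n)
  calc ℙ {ω | ⌊(n : ℝ) ^ ρ⌋₊ + 1 ≤ #{z ∈ S n | ξ z ω ∈ Set.Ioi ((D - ρ + ε) * log n)}}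
      ≤ (#(S n)).choose (⌊(n : ℝ) ^ ρ⌋₊ + 1) *
          ENNReal.ofReal (exp (-((D - ρ + ε) * log n))) ^ (⌊(n : ℝ) ^ ρ⌋₊ + 1) :=
        measure_le_card_filter_mem_le hξ measurableSet_Ioi (fun z _ => hdist z _ hx) _
    _ ≤ ENNReal.ofReal ((n : ℝ) ^ (-2 : ℝ)) := by
        rw [exp_neg_mul_log (Nat.cast_pos.2 hn0), ← ENNReal.ofReal_pow (rpow_nonneg n.cast_nonneg _), ← ENNReal.ofReal_natCast,
          ← ENNReal.ofReal_mul (Nat.cast_nonneg _)]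
        exact ENNReal.ofReal_le_ofReal hn

theorem ae_eventually_card_filter_le_lt (hmeas : ∀ z, Measurable (ξ z)) (hξ : iIndepFun ξ ℙ)
    (hdist : ∀ z, ∀ x : ℝ, 0 ≤ x → ℙ {ω | x < ξ z ω} = ENNReal.ofReal (exp (-x)))
    (hρ : 0 ≤ ρ) (hε : 0 < ε) (hρεD : ρ + ε ≤ D) {c C : ℝ} (hc : 0 < c)
    (hS : ∀ᶠ n : ℕ in atTop, c * (n : ℝ) ^ D ≤ #(S n) ∧ (#(S n) : ℝ) ≤ C * (n : ℝ) ^ D) :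
    ∀ᵐ ω, ∀ᶠ n : ℕ in atTop,
      #{z ∈ S n | ξ z ω ≤ (D - ρ - ε) * log n} < #(S n) - ⌊(n : ℝ) ^ ρ⌋₊ := by
  have hbound := eventually_choose_sub_mul_one_sub_rpow_pow_le hc hρ hε hρεD hS
    (k := fun n => ⌊(n : ℝ) ^ ρ⌋₊) fun n => Nat.floor_le (rpow_nonneg n.cast_nonneg _)
  refine (ae_eventually_notMem_of_summable (fun n => rpow_nonneg n.cast_nonneg _)
    (summable_nat_rpow.2 (by norm_num : (-2 : ℝ) < -1)) ?_).mono
    fun ω hω => hω.mono fun n hn => not_le.1 hn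
  filter_upwards [hbound, eventually_gt_atTop 0] with n hn hn0
  have hy : 0 ≤ (D - ρ - ε) * log n := mul_nonneg (by linarith) (log_natCast_nonneg n)
  have hp (z : ι) : ℙ (ξ z ⁻¹' Set.Iic ((D - ρ - ε) * log n)) =
      ENNReal.ofReal (1 - (n : ℝ) ^ (-(D - ρ - ε))) := by
    rw [← Set.compl_Ioi, Set.preimage_compl, prob_compl_eq_one_sub (hmeas z measurableSet_Ioi),
      ← exp_neg_mul_log (Nat.cast_pos.2 hn0), ENNReal.ofReal_sub _ (exp_pos _).le, ENNReal.ofReal_one]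
    exact congrArg (1 - ·) (hdist z _ hy)
  calc ℙ {ω | #(S n) - ⌊(n : ℝ) ^ ρ⌋₊ ≤
        #{z ∈ S n | ξ z ω ∈ Set.Iic ((D - ρ - ε) * log n)}}
      ≤ (#(S n)).choose (#(S n) - ⌊(n : ℝ) ^ ρ⌋₊) *
          ENNReal.ofReal (1 - (n : ℝ) ^ (-(D - ρ - ε))) ^ (#(S n) - ⌊(n : ℝ) ^ ρ⌋₊) :=
        measure_le_card_filter_mem_le hξ measurableSet_Iic (fun z _ => hp z) _
    _ ≤ ENNReal.ofReal ((n : ℝ) ^ (-2 : ℝ)) := by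
        rw [← ENNReal.ofReal_pow (sub_nonneg.2 (rpow_le_one_of_one_le_of_nonpos
          (by exact_mod_cast hn0) (by linarith))), ← ENNReal.ofReal_natCast,
          ← ENNReal.ofReal_mul (Nat.cast_nonneg _)]
        exact ENNReal.ofReal_le_ofReal hn

end Thresholds

theorem card_latticeBall_le (d n : ℕ) : #(latticeBall d n) ≤ (2 * n + 1) ^ d := by
  refine (card_filter_le _ _).trans_eq ?_
  simp only [Pi.card_Icc, Int.card_Icc, prod_const, card_univ, Fintype.card_fin]
  congr 1
  omega

theorem pow_le_card_latticeBall {d n r : ℕ} (h : d * r ≤ n) :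
    (r + 1) ^ d ≤ #(latticeBall d n) := by
  have hsub : Icc (fun _ : Fin d => (0 : ℤ)) (fun _ => (r : ℤ)) ⊆ latticeBall d n := by
    intro z hz
    rw [mem_Icc] at hz
    have h0 (j : Fin d) : 0 ≤ z j := hz.1 j
    have hr (j : Fin d) : z j ≤ r := hz.2 j
    refine mem_filter.2 ⟨mem_Icc.2 ⟨fun j => ?_, fun j => ?_⟩, ?_⟩
    · have := h0 j
      show -(n : ℤ) ≤ z j
      omega
    · have := hr j
      have := (Nat.le_mul_of_pos_left r (Fin.pos j)).trans h
      show z j ≤ n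
      omega
    · calc ∑ j, (z j).natAbs ≤ ∑ _j : Fin d, r :=
            sum_le_sum fun j _ => by have := h0 j; have := hr j; omega
        _ = d * r := by simp
        _ ≤ n := h
  calc (r + 1) ^ d = #(Icc (fun _ : Fin d => (0 : ℤ)) (fun _ => (r : ℤ))) := by
        simp only [Pi.card_Icc, Int.card_Icc, prod_const, card_univ, Fintype.card_fin]
        congr 1
    _ ≤ #(latticeBall d n) := card_le_card hsub

theorem card_latticeBall_le_rpow (d : ℕ) {n : ℕ} (hn : 0 < n) :
    (#(latticeBall d n) : ℝ) ≤ 3 ^ d * (n : ℝ) ^ (d : ℝ) := by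
  rw [rpow_natCast, ← mul_pow]
  exact_mod_cast (card_latticeBall_le d n).trans (Nat.pow_le_pow_left (by omega) d)

theorem rpow_le_card_latticeBall (d n : ℕ) :
    ((d : ℝ) ^ d)⁻¹ * (n : ℝ) ^ (d : ℝ) ≤ #(latticeBall d n) := by
  rw [rpow_natCast, ← div_eq_inv_mul, ← div_pow]
  calc ((n : ℝ) / d) ^ d ≤ (((n / d : ℕ) : ℝ) + 1) ^ d := by
        gcongr
        rw [← Nat.floor_div_eq_div (K := ℝ)]
        exact (Nat.lt_floor_add_one _).le
    _ ≤ #(latticeBall d n) := by exact_mod_cast pow_le_card_latticeBall (Nat.mul_div_le n d)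

theorem exponential_upper_order_statistics_general
    {Ω : Type*} [MeasureSpace Ω] [IsProbabilityMeasure (ℙ : Measure Ω)]
    (d : ℕ) (ρ : ℝ) (hρ : ρ ∈ Set.Ioo (0 : ℝ) d)
    (ξ : (Fin d → ℤ) → Ω → ℝ) (hmeas : ∀ z, Measurable (ξ z))
    (hindep : iIndepFun ξ ℙ)
    (hdist : ∀ z, ∀ x : ℝ, 0 ≤ x → ℙ {ω | x < ξ z ω} = ENNReal.ofReal (Real.exp (-x)))
    (Mk : ℕ → Ω → ℝ)
    -- `Mk n ω` is the `(⌊n^ρ⌋+1)`st largest value of the field on the ball of radius `n`: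
    (hMk : ∀ᵐ ω ∂ℙ, ∀ᶠ n : ℕ in atTop,
      (∃ z ∈ latticeBall d n, ξ z ω = Mk n ω) ∧
      ((latticeBall d n).filter (fun z => Mk n ω ≤ ξ z ω)).card = ⌊(n : ℝ) ^ ρ⌋₊ + 1) :
    ∀ᵐ ω ∂ℙ, Tendsto (fun n : ℕ => Mk n ω / Real.log n) atTop (nhds ((d : ℝ) - ρ)) := by
  obtain ⟨hρ0, hρd⟩ := hρ
  have hcard : ∀ᶠ n : ℕ in atTop, ((d : ℝ) ^ d)⁻¹ * (n : ℝ) ^ (d : ℝ) ≤ #(latticeBall d n) ∧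
      (#(latticeBall d n) : ℝ) ≤ 3 ^ d * (n : ℝ) ^ (d : ℝ) :=
    (eventually_gt_atTop 0).mono fun n hn =>
      ⟨rpow_le_card_latticeBall d n, card_latticeBall_le_rpow d hn⟩
  refine ae_tendsto_of_forall_ae_eventually_mem_Icc (sub_pos.2 hρd) fun ε hε hεd => ?_
  filter_upwards [ae_eventually_card_filter_lt_lt hindep hdist hρ0 hε hρd.le
      (hcard.mono fun _ => And.right),
    ae_eventually_card_filter_le_lt hmeas hindep hdist hρ0.le hε (by linarith)
      (inv_pos.2 (pow_pos (hρ0.trans hρd) d)) hcard, hMk] with ω hup hlow hM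
  filter_upwards [hup, hlow, hM, eventually_gt_atTop 1] with n hupn hlown ⟨⟨z₀, hz₀, hMz₀⟩, hk⟩ hn
  have hlog : 0 < log n := log_pos (by exact_mod_cast hn)
  have hMx := le_of_card_filter_lt_card_filter (hupn.trans_eq hk.symm)
  have hyM : (d - ρ - ε) * log n < Mk n ω := by
    rw [← hMz₀] at hk ⊢
    refine lt_of_card_filter_add_card_filter_le (v := (ξ · ω)) hz₀ ?_
    have := card_filter_le (latticeBall d n) fun z => ξ z₀ ω ≤ ξ z ω
    omega
  constructor
  · rw [le_div_iff₀ hlog]; linarith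
  · rw [div_le_iff₀ hlog]; linarith

theorem exponential_upper_order_statistics
    {Ω : Type*} [MeasureSpace Ω] [IsProbabilityMeasure (ℙ : Measure Ω)]
    (d : ℕ) (hd : 1 ≤ d) (ρ : ℝ) (hρ : ρ ∈ Set.Ioo (0 : ℝ) d)
    (ξ : (Fin d → ℤ) → Ω → ℝ) (hmeas : ∀ z, Measurable (ξ z))
    (hindep : iIndepFun ξ ℙ)
    (hdist : ∀ z, ∀ x : ℝ, 0 ≤ x → ℙ {ω | x < ξ z ω} = ENNReal.ofReal (Real.exp (-x)))
    (Mk : ℕ → Ω → ℝ)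
    -- `Mk n ω` is the `(⌊n^ρ⌋+1)`st largest value of the field on the ball of radius `n`:
    (hMk : ∀ᵐ ω ∂ℙ, ∀ᶠ n : ℕ in atTop,
      (∃ z ∈ latticeBall d n, ξ z ω = Mk n ω) ∧
      ((latticeBall d n).filter (fun z => Mk n ω ≤ ξ z ω)).card = ⌊(n : ℝ) ^ ρ⌋₊ + 1) :
    ∀ᵐ ω ∂ℙ, Tendsto (fun n : ℕ => Mk n ω / Real.log n) atTop (nhds ((d : ℝ) - ρ)) :=
  exponential_upper_order_statistics_general d ρ hρ ξ hmeas hindep hdist Mk hMk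
end

section
/- Let $n\ge1$, let $\xi_0,\dots,\xi_n$ be real numbers with a unique maximum attained at index $i^*$ and such that $\xi_{i^*}-\xi_i\ge1$ for all $i\ne i^*$. Then for every $t>0$, $e^{t\xi_n}\int_{\{x\in\mathbb{R}_+^n:\ \sum_{i=0}^{n-1}x_i<t\}}\exp\Big\{\sum_{i=0}^{n-1}x_i(\xi_i-\xi_n)\Big\}dx_0\cdots dx_{n-1}\ \le\ e^{t\xi_{i^*}}\prod_{i\ne i^*}\frac{1}{\xi_{i^*}-\xi_i}$. -/
/-! With `x_n := t - ∑_{i<n} x_i`, the exponent `t ξ_n + ∑_{i<n} x_i (ξ_i - ξ_n)` equals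
`∑_{k ≤ n} x_k ξ_k`. Exchanging `x_j` with `x_n` is an affine map of determinant `-1` that
preserves the open simplex, so the integral is invariant under transposing `ξ_j` and `ξ_n`, and
we may assume that the maximum sits at `i* = n`. The integrand is then
`∏_{i<n} exp (-(ξ_n - ξ_i) x_i)`, and enlarging the simplex to the positive orthant bounds the
integral by `∏_{i<n} (ξ_n - ξ_i)⁻¹`. -/

open MeasureTheory Set Real

section Orthant

variable {ι : Type*} [Fintype ι]

lemma integral_Ioi_exp_neg_mul {a : ℝ} (ha : 0 < a) :
    ∫ x in Ioi (0 : ℝ), exp (-a * x) = a⁻¹ := by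
  have h := integral_comp_mul_left_Ioi (fun y => exp (-y)) 0 ha
  simpa only [mul_zero, integral_exp_neg_Ioi_zero, smul_eq_mul, mul_one, neg_mul] using h

lemma volume_restrict_orthant :
    (volume : Measure (ι → ℝ)).restrict (univ.pi fun _ => Ioi 0) =
      Measure.pi fun _ => volume.restrict (Ioi 0) :=
  Measure.restrict_pi_pi _ _

lemma exp_neg_sum_mul (a x : ι → ℝ) : exp (-∑ i, a i * x i) = ∏ i, exp (-a i * x i) := by
  simp_rw [← Finset.sum_neg_distrib, exp_sum, neg_mul]

lemma integrableOn_orthant_exp_neg_sum {a : ι → ℝ} (ha : ∀ i, 0 < a i) :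
    IntegrableOn (fun x : ι → ℝ => exp (-∑ i, a i * x i)) (univ.pi fun _ => Ioi 0) := by
  simp_rw [IntegrableOn, volume_restrict_orthant, exp_neg_sum_mul]
  exact Integrable.fintype_prod fun i => exp_neg_integrableOn_Ioi 0 (ha i)

lemma integral_orthant_exp_neg_sum {a : ι → ℝ} (ha : ∀ i, 0 < a i) :
    ∫ x in univ.pi (fun _ => Ioi 0), exp (-∑ i, a i * x i) = ∏ i, (a i)⁻¹ := by
  simp_rw [volume_restrict_orthant, exp_neg_sum_mul]
  rw [integral_fintype_prod_eq_prod fun i y => exp (-a i * y)]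
  simp_rw [integral_Ioi_exp_neg_mul (ha _)]

end Orthant

section Simplex

variable {ι : Type*} [Fintype ι]

def openSimplex (t : ℝ) : Set (ι → ℝ) := {x | (∀ i, 0 < x i) ∧ ∑ i, x i < t}

lemma openSimplex_subset_orthant (t : ℝ) : openSimplex t ⊆ univ.pi fun _ : ι => Ioi 0 :=
  fun _ hx i _ => hx.1 i

lemma setIntegral_openSimplex_exp_neg_le (t : ℝ) {a : ι → ℝ} (ha : ∀ i, 0 < a i) :
    ∫ x in openSimplex t, exp (-∑ i, a i * x i) ≤ ∏ i, (a i)⁻¹ := by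
  rw [← integral_orthant_exp_neg_sum ha]
  exact setIntegral_mono_set (integrableOn_orthant_exp_neg_sum ha)
    (.of_forall fun _ => (exp_pos _).le) (openSimplex_subset_orthant t).eventuallyLE

variable [DecidableEq ι]

def swapSlack (j : ι) (t : ℝ) (x : ι → ℝ) : ι → ℝ := Function.update x j (t - ∑ i, x i)

variable (j : ι) (t : ℝ)

lemma sum_swapSlack (x : ι → ℝ) : ∑ i, swapSlack j t x i = t - x j := by
  rw [swapSlack, Finset.sum_update_of_mem (Finset.mem_univ j), Finset.sdiff_singleton_eq_erase,
    Finset.sum_erase_eq_sub (Finset.mem_univ j)]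
  ring

lemma swapSlack_involutive : Function.Involutive (swapSlack j t) := by
  intro x
  rw [swapSlack, sum_swapSlack, swapSlack, Function.update_idem, sub_sub_cancel,
    Function.update_eq_self]

lemma measurePreserving_swapSlack :
    MeasurePreserving (swapSlack j t) (volume : Measure (ι → ℝ)) volume := by
  have hrow : (-1 : ι → ℝ) = ∑ k, (-1 : ℝ) • (1 : Matrix ι ι ℝ) k := by
    ext; simp [Matrix.one_apply]
  set M : Matrix ι ι ℝ := (1 : Matrix ι ι ℝ).updateRow j (-1) with hM_def
  have hdet : LinearMap.det (Matrix.toLin' M) = -1 := by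
    rw [LinearMap.det_toLin', hM_def, hrow, Matrix.det_updateRow_sum]
    simp
  have hM : MeasurePreserving (Matrix.toLin' M) (volume : Measure (ι → ℝ)) volume := by
    refine ⟨(Matrix.toLin' M).continuous_of_finiteDimensional.measurable, ?_⟩
    rw [Real.map_linearMap_volume_pi_eq_smul_volume_pi (by simp [hdet]), hdet]
    simp
  have hsplit : swapSlack j t = (Pi.single j t + ·) ∘ Matrix.toLin' M := by
    ext x i
    rcases eq_or_ne i j with rfl | hij
    · simp [M, swapSlack, Matrix.updateRow_mulVec, sub_eq_add_neg, dotProduct]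
    · simp [M, swapSlack, Matrix.updateRow_mulVec, hij]
  rw [hsplit]
  exact (measurePreserving_add_left volume _).comp hM

lemma swapSlack_mem_openSimplex {x : ι → ℝ} (hx : x ∈ openSimplex t) :
    swapSlack j t x ∈ openSimplex t := by
  obtain ⟨hpos, hsum⟩ := hx
  refine ⟨fun i => ?_, by rw [sum_swapSlack]; linarith [hpos j]⟩
  rcases eq_or_ne i j with rfl | hij
  · simpa [swapSlack] using hsum
  · simpa [swapSlack, hij] using hpos i

lemma setIntegral_openSimplex_comp_swapSlack (f : (ι → ℝ) → ℝ) :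
    ∫ x in openSimplex t, f (swapSlack j t x) = ∫ x in openSimplex t, f x := by
  have hpre : swapSlack j t ⁻¹' openSimplex t = openSimplex t :=
    Subset.antisymm (fun x hx => swapSlack_involutive j t x ▸ swapSlack_mem_openSimplex j t hx)
      fun x => swapSlack_mem_openSimplex j t
  have he := (MeasurableEquiv.ofInvolutive _ (swapSlack_involutive j t)
    (measurePreserving_swapSlack j t).measurable).measurableEmbedding
  conv_lhs => rw [← hpre]
  exact (measurePreserving_swapSlack j t).setIntegral_preimage_emb he f _

end Simplex

section PathIntegral

open Fin

variable {n : ℕ}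

def slackSnoc (t : ℝ) (x : Fin n → ℝ) : Fin (n + 1) → ℝ := snoc x (t - ∑ i, x i)

noncomputable def pathIntegral (t : ℝ) (ξ : Fin (n + 1) → ℝ) : ℝ :=
  exp (t * ξ (last n)) *
    ∫ x : Fin n → ℝ in openSimplex t, exp (∑ i, x i * (ξ i.castSucc - ξ (last n)))

lemma slackSnoc_swapSlack (t : ℝ) (j : Fin n) (x : Fin n → ℝ) :
    slackSnoc t (swapSlack j t x) = slackSnoc t x ∘ Equiv.swap j.castSucc (last n) := by
  ext k
  induction k using lastCases with
  | last =>
    simp only [slackSnoc, sum_swapSlack]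
    simp [swapSlack]
  | cast i =>
    rcases eq_or_ne i j with rfl | hij
    · simp [slackSnoc, swapSlack]
    · simp [slackSnoc, swapSlack, hij, Equiv.swap_apply_of_ne_of_ne, castSucc_lt_last i |>.ne]

lemma pathIntegral_eq_integral_slackSnoc (t : ℝ) (ξ : Fin (n + 1) → ℝ) :
    pathIntegral t ξ = ∫ x in openSimplex t, exp (∑ k, slackSnoc t x k * ξ k) := by
  rw [pathIntegral, ← integral_const_mul]
  congr 1 with x
  rw [← exp_add, sum_univ_castSucc]
  simp only [slackSnoc, snoc_castSucc, snoc_last, mul_sub, Finset.sum_sub_distrib,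
    ← Finset.sum_mul]
  ring_nf

lemma pathIntegral_comp_swap_last (t : ℝ) (ξ : Fin (n + 1) → ℝ) (s : Fin (n + 1)) :
    pathIntegral t (ξ ∘ Equiv.swap s (last n)) = pathIntegral t ξ := by
  rcases eq_castSucc_or_eq_last s with ⟨j, rfl⟩ | rfl
  · rw [pathIntegral_eq_integral_slackSnoc, pathIntegral_eq_integral_slackSnoc,
      ← setIntegral_openSimplex_comp_swapSlack j t]
    congr 1 with x
    rw [slackSnoc_swapSlack]
    exact congrArg exp (Equiv.sum_comp _ fun k => slackSnoc t x k * ξ k)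
  · rw [Equiv.swap_self, Equiv.coe_refl, Function.comp_id]

lemma prod_erase_last {M : Type*} [CommMonoid M] (f : Fin (n + 1) → M) :
    ∏ k ∈ Finset.univ.erase (last n), f k = ∏ i : Fin n, f i.castSucc := by
  rw [show Finset.univ.erase (last n) = Finset.univ.map castSuccEmb by
    rw [← Iio_last_eq_map]; ext k; simp [exists_castSucc_eq], Finset.prod_map]
  rfl

lemma pathIntegral_le_of_lt_last (t : ℝ) {ξ : Fin (n + 1) → ℝ}
    (hmax : ∀ k, k ≠ last n → ξ k < ξ (last n)) :
    pathIntegral t ξ ≤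
      exp (t * ξ (last n)) * ∏ k ∈ Finset.univ.erase (last n), (ξ (last n) - ξ k)⁻¹ := by
  have ha : ∀ i : Fin n, 0 < ξ (last n) - ξ i.castSucc :=
    fun i => sub_pos.2 (hmax _ (castSucc_lt_last i).ne)
  have hexponent (x : Fin n → ℝ) : ∑ i, x i * (ξ i.castSucc - ξ (last n)) =
      -∑ i, (ξ (last n) - ξ i.castSucc) * x i := by
    rw [← Finset.sum_neg_distrib]
    congr 1 with i
    ring
  rw [pathIntegral, prod_erase_last]
  simp_rw [hexponent]
  exact mul_le_mul_of_nonneg_left (setIntegral_openSimplex_exp_neg_le t ha) (exp_pos _).le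

lemma pathIntegral_le (t : ℝ) {ξ : Fin (n + 1) → ℝ} {s : Fin (n + 1)}
    (hmax : ∀ k, k ≠ s → ξ k < ξ s) :
    pathIntegral t ξ ≤ exp (t * ξ s) * ∏ k ∈ Finset.univ.erase s, (ξ s - ξ k)⁻¹ := by
  set τ := Equiv.swap s (last n)
  have hmax' : ∀ k, k ≠ last n → (ξ ∘ τ) k < (ξ ∘ τ) (last n) := fun k hk => by
    simpa [τ] using hmax (τ k) (by simpa [τ, Equiv.swap_apply_eq_iff] using hk)
  have hprod : ∏ k ∈ Finset.univ.erase (last n), ((ξ ∘ τ) (last n) - (ξ ∘ τ) k)⁻¹ =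
      ∏ k ∈ Finset.univ.erase s, (ξ s - ξ k)⁻¹ :=
    Finset.prod_equiv τ (by simp [τ, Equiv.swap_apply_eq_iff]) (by simp [τ])
  calc pathIntegral t ξ = pathIntegral t (ξ ∘ τ) := (pathIntegral_comp_swap_last t ξ s).symm
    _ ≤ _ := pathIntegral_le_of_lt_last t hmax'
    _ = _ := by rw [hprod]; simp [τ]

end PathIntegral

theorem feynman_kac_path_integral_bound_general
    (n : ℕ) (ξ : Fin (n + 1) → ℝ) (istar : Fin (n + 1))
    (hmax : ∀ i, i ≠ istar → ξ i < ξ istar)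
    (t : ℝ) :
    Real.exp (t * ξ (Fin.last n)) *
        ∫ x in {x : Fin n → ℝ | (∀ i, 0 < x i) ∧ ∑ i, x i < t},
          Real.exp (∑ i, x i * (ξ i.castSucc - ξ (Fin.last n)))
      ≤ Real.exp (t * ξ istar) *
        ∏ i ∈ Finset.univ.erase istar, (ξ istar - ξ i)⁻¹ :=
  pathIntegral_le t hmax

theorem feynman_kac_path_integral_bound
    (n : ℕ) (hn : 1 ≤ n) (ξ : Fin (n + 1) → ℝ) (istar : Fin (n + 1))
    (hgap : ∀ i, i ≠ istar → 1 ≤ ξ istar - ξ i)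
    (hmax : ∀ i, i ≠ istar → ξ i < ξ istar)
    (t : ℝ) (ht : 0 < t) :
    Real.exp (t * ξ (Fin.last n)) *
        ∫ x in {x : Fin n → ℝ | (∀ i, 0 < x i) ∧ ∑ i, x i < t},
          Real.exp (∑ i, x i * (ξ i.castSucc - ξ (Fin.last n)))
      ≤ Real.exp (t * ξ istar) *
        ∏ i ∈ Finset.univ.erase istar, (ξ istar - ξ i)⁻¹ :=
  feynman_kac_path_integral_bound_general n ξ istar hmax t
end
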